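/- arXiv:1903.11153 — 17 statements merged into one kernel-verified Lean document; each statement's English description precedes it below -/
import Mathlib

section
/- Let X and Y be Banach spaces, A : X → Y and B, C : Y → X bounded linear operators satisfying A(BA)² = ABACA = ACABA = (AC)²A. Then for every natural number k, ABA(CA − I)^k = (AB − I)^k ABA. -/
open Polynomial ContinuousLinearMap

variable {X Y : Type*} [NormedAddCommGroup X] [NormedSpace ℂ X] [CompleteSpace X]
  [NormedAddCommGroup Y] [NormedSpace ℂ Y] [CompleteSpace Y]
theorem stmt0 (A : X →L[ℂ] Y) (B C : Y →L[ℂ] X)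
    (h1 : A ∘L B ∘L A ∘L B ∘L A = A ∘L B ∘L A ∘L C ∘L A)
    (h2 : A ∘L B ∘L A ∘L C ∘L A = A ∘L C ∘L A ∘L B ∘L A)
    (h3 : A ∘L C ∘L A ∘L B ∘L A = A ∘L C ∘L A ∘L C ∘L A) (k : ℕ) :
    (A ∘L B ∘L A) ∘L ((C ∘L A - 1) ^ k) = ((A ∘L B - 1) ^ k) ∘L (A ∘L B ∘L A) := by
  have key : (A ∘L B ∘L A) ∘L (C ∘L A - 1) = (A ∘L B - 1) ∘L (A ∘L B ∘L A) := by
    simp only [ContinuousLinearMap.comp_sub, ContinuousLinearMap.sub_comp,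
      ContinuousLinearMap.one_def, ContinuousLinearMap.comp_id, ContinuousLinearMap.id_comp]
    congr 1
    simp only [← ContinuousLinearMap.comp_assoc] at h1 ⊢
    exact h1.symm
  induction k with
  | zero => simp [ContinuousLinearMap.one_def]
  | succ k ih =>
    rw [pow_succ, pow_succ, mul_def, mul_def, ← ContinuousLinearMap.comp_assoc, ih,
      ContinuousLinearMap.comp_assoc, key, ← ContinuousLinearMap.comp_assoc]
end

section
/- Let X and Y be Banach spaces, A : X → Y and B, C : Y → X bounded linear operators satisfying A(BA)² = ABACA = ACABA = (AC)²A. Then for every natural number k, ACA(BA − I)^k = (AC − I)^k ACA. -/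
open Polynomial ContinuousLinearMap

variable {X Y : Type*} [NormedAddCommGroup X] [NormedSpace ℂ X] [CompleteSpace X]
  [NormedAddCommGroup Y] [NormedSpace ℂ Y] [CompleteSpace Y]
theorem stmt1 (A : X →L[ℂ] Y) (B C : Y →L[ℂ] X)
    (h1 : A ∘L B ∘L A ∘L B ∘L A = A ∘L B ∘L A ∘L C ∘L A)
    (h2 : A ∘L B ∘L A ∘L C ∘L A = A ∘L C ∘L A ∘L B ∘L A)
    (h3 : A ∘L C ∘L A ∘L B ∘L A = A ∘L C ∘L A ∘L C ∘L A) (k : ℕ) :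
    (A ∘L C ∘L A) ∘L ((B ∘L A - 1) ^ k) = ((A ∘L C - 1) ^ k) ∘L (A ∘L C ∘L A) := by
  have key : (A ∘L C ∘L A) ∘L (B ∘L A - 1) = (A ∘L C - 1) ∘L (A ∘L C ∘L A) := by
    ext x
    have := DFunLike.congr_fun h3 x
    simp only [coe_comp', Function.comp_apply] at this
    simp [this]
  induction k with
  | zero => ext x; simp
  | succ n ih =>
    rw [pow_succ, pow_succ, mul_def, mul_def, ← ContinuousLinearMap.comp_assoc, ih,
      ContinuousLinearMap.comp_assoc, key, ← ContinuousLinearMap.comp_assoc]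
end

section
/- Let A : X → Y and B, C : Y → X be bounded linear operators satisfying A(BA)² = ABACA = ACABA = (AC)²A, and let Q be a polynomial. Then ABA maps the range of Q(CA − I) into the range of Q(AB − I), and ABA maps the kernel of Q(CA − I) into the kernel of Q(AB − I). -/
open Polynomial ContinuousLinearMap

variable {X Y : Type*} [NormedAddCommGroup X] [NormedSpace ℂ X] [CompleteSpace X]
  [NormedAddCommGroup Y] [NormedSpace ℂ Y] [CompleteSpace Y]

theorem ContinuousLinearMap.aeval_comp_of_comp_eq {R E F : Type*} [CommSemiring R]
    [TopologicalSpace E] [AddCommGroup E] [IsTopologicalAddGroup E] [Module R E]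
    [ContinuousConstSMul R E] [TopologicalSpace F] [AddCommGroup F] [IsTopologicalAddGroup F]
    [Module R F] [ContinuousConstSMul R F]
    {S : E →L[R] F} {T : F →L[R] F} {U : E →L[R] E} (h : T ∘L S = S ∘L U) (p : R[X]) :
    aeval T p ∘L S = S ∘L aeval U p := by
  induction p using Polynomial.induction_on with
  | C a => ext x; simp [Algebra.algebraMap_eq_smul_one]
  | add p q hp hq => simp only [map_add, add_comp, comp_add, hp, hq]
  | monomial n a ih =>
    rw [pow_succ, ← mul_assoc, map_mul (aeval T), map_mul (aeval U), aeval_X, aeval_X,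
      mul_def, mul_def, comp_assoc, h, ← comp_assoc, ih, comp_assoc]

theorem stmt2_general (A : X →L[ℂ] Y) (B C : Y →L[ℂ] X)
    (h1 : A ∘L B ∘L A ∘L B ∘L A = A ∘L B ∘L A ∘L C ∘L A) (Q : ℂ[X]) :
    (∀ x : X, x ∈ LinearMap.range (Polynomial.aeval (C ∘L A - 1) Q : X →ₗ[ℂ] X) →
      (A ∘L B ∘L A) x ∈ LinearMap.range (Polynomial.aeval (A ∘L B - 1) Q : Y →ₗ[ℂ] Y)) ∧
    (∀ x : X, x ∈ LinearMap.ker (Polynomial.aeval (C ∘L A - 1) Q : X →ₗ[ℂ] X) →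
      (A ∘L B ∘L A) x ∈ LinearMap.ker (Polynomial.aeval (A ∘L B - 1) Q : Y →ₗ[ℂ] Y)) := by
  have intertwine : (A ∘L B - 1) ∘L (A ∘L B ∘L A) = (A ∘L B ∘L A) ∘L (C ∘L A - 1) := by
    rw [ContinuousLinearMap.sub_comp, comp_sub, one_def, id_comp, one_def, comp_id]
    simp only [ContinuousLinearMap.comp_assoc, h1]
  have hQ := DFunLike.congr_fun (aeval_comp_of_comp_eq intertwine Q)
  refine ⟨?_, fun x hx => ?_⟩
  · rintro _ ⟨y, rfl⟩
    exact ⟨A ∘L B ∘L A <| y, hQ y⟩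
  · rw [LinearMap.mem_ker, coe_coe] at hx ⊢
    simpa [hx] using hQ x

theorem stmt2 (A : X →L[ℂ] Y) (B C : Y →L[ℂ] X)
    (h1 : A ∘L B ∘L A ∘L B ∘L A = A ∘L B ∘L A ∘L C ∘L A)
    (h2 : A ∘L B ∘L A ∘L C ∘L A = A ∘L C ∘L A ∘L B ∘L A)
    (h3 : A ∘L C ∘L A ∘L B ∘L A = A ∘L C ∘L A ∘L C ∘L A) (Q : ℂ[X]) :
    (∀ x : X, x ∈ LinearMap.range (Polynomial.aeval (C ∘L A - 1) Q : X →ₗ[ℂ] X) →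
      (A ∘L B ∘L A) x ∈ LinearMap.range (Polynomial.aeval (A ∘L B - 1) Q : Y →ₗ[ℂ] Y)) ∧
    (∀ x : X, x ∈ LinearMap.ker (Polynomial.aeval (C ∘L A - 1) Q : X →ₗ[ℂ] X) →
      (A ∘L B ∘L A) x ∈ LinearMap.ker (Polynomial.aeval (A ∘L B - 1) Q : Y →ₗ[ℂ] Y)) :=
  stmt2_general A B C h1 Q
end

section
/- Let A : X → Y and B, C : Y → X be bounded linear operators satisfying A(BA)² = ABACA = ACABA = (AC)²A, and let Q be a polynomial. Then ACA maps the range of Q(BA − I) into the range of Q(AC − I), and ACA maps the kernel of Q(BA − I) into the kernel of Q(AC − I). -/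
/-! By the last identity, `ACA (BA - 1) = ACABA - ACA = ACACA - ACA = (AC - 1) ACA`, so `ACA`
intertwines `BA - 1` with `AC - 1`, hence `Q(BA - 1)` with `Q(AC - 1)`; an intertwining map
sends ranges into ranges and kernels into kernels. -/

open Polynomial ContinuousLinearMap

variable {X Y : Type*} [NormedAddCommGroup X] [NormedSpace ℂ X] [CompleteSpace X]
  [NormedAddCommGroup Y] [NormedSpace ℂ Y] [CompleteSpace Y]

namespace LinearMap

variable {R M M' N N' : Type*} [Semiring R] [AddCommMonoid M] [Module R M]
  [AddCommMonoid M'] [Module R M'] [AddCommMonoid N] [Module R N] [AddCommMonoid N'] [Module R N']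
  {f : M →ₗ[R] N} {f' : M' →ₗ[R] N'} {g : M →ₗ[R] M'} {h : N →ₗ[R] N'}

theorem mapsTo_range_of_comp_eq (hc : f' ∘ₗ g = h ∘ₗ f) : Set.MapsTo f' (range g) (range h) := by
  rintro _ ⟨x, rfl⟩
  exact ⟨f x, by rw [← comp_apply, ← hc, comp_apply]⟩

theorem mapsTo_ker_of_comp_eq (hc : f' ∘ₗ g = h ∘ₗ f) : Set.MapsTo f (ker g) (ker h) := by
  intro x hx
  rw [SetLike.mem_coe, mem_ker] at hx ⊢
  rw [← comp_apply, ← hc, comp_apply, hx, map_zero]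

end LinearMap

namespace ContinuousLinearMap

section

variable {R M N : Type*} [CommSemiring R]
  [TopologicalSpace M] [AddCommGroup M] [Module R M] [ContinuousConstSMul R M] [IsTopologicalAddGroup M]
  [TopologicalSpace N] [AddCommGroup N] [Module R N] [ContinuousConstSMul R N] [IsTopologicalAddGroup N]

theorem comp_aeval_eq_aeval_comp (f : M →L[R] N) {S : M →L[R] M} {T : N →L[R] N}
    (h : f ∘L S = T ∘L f) (p : Polynomial R) : f ∘L aeval S p = aeval T p ∘L f := by
  induction p using Polynomial.induction_on with
  | C a => ext; simp
  | add p q hp hq => rw [map_add, map_add, comp_add, add_comp, hp, hq]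
  | monomial n a ih =>
    rw [pow_succ, ← mul_assoc, map_mul (aeval S) _ Polynomial.X, map_mul (aeval T) _ Polynomial.X,
      aeval_X, aeval_X, mul_def, mul_def, ← comp_assoc, ih, comp_assoc, h, comp_assoc]

end

theorem comp_sub_one_eq_sub_one_comp {R M N : Type*} [Ring R]
    [TopologicalSpace M] [AddCommGroup M] [Module R M] [IsTopologicalAddGroup M]
    [TopologicalSpace N] [AddCommGroup N] [Module R N] [IsTopologicalAddGroup N]
    (A : M →L[R] N) (B C : N →L[R] M) (h : A ∘L C ∘L A ∘L B ∘L A = A ∘L C ∘L A ∘L C ∘L A) :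
    (A ∘L C ∘L A) ∘L (B ∘L A - 1) = (A ∘L C - 1) ∘L (A ∘L C ∘L A) := by
  ext x
  simpa using congr($h x - (A ∘L C ∘L A) x)

end ContinuousLinearMap

theorem stmt3_general (A : X →L[ℂ] Y) (B C : Y →L[ℂ] X)
    (h3 : A ∘L C ∘L A ∘L B ∘L A = A ∘L C ∘L A ∘L C ∘L A) (Q : ℂ[X]) :
    (∀ x : X, x ∈ LinearMap.range (Polynomial.aeval (B ∘L A - 1) Q : X →ₗ[ℂ] X) →
      (A ∘L C ∘L A) x ∈ LinearMap.range (Polynomial.aeval (A ∘L C - 1) Q : Y →ₗ[ℂ] Y)) ∧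
    (∀ x : X, x ∈ LinearMap.ker (Polynomial.aeval (B ∘L A - 1) Q : X →ₗ[ℂ] X) →
      (A ∘L C ∘L A) x ∈ LinearMap.ker (Polynomial.aeval (A ∘L C - 1) Q : Y →ₗ[ℂ] Y)) := by
  have hQ := congr_arg ((↑) : (X →L[ℂ] Y) → X →ₗ[ℂ] Y)
    ((A ∘L C ∘L A).comp_aeval_eq_aeval_comp (comp_sub_one_eq_sub_one_comp A B C h3) Q)
  rw [toLinearMap_comp, toLinearMap_comp] at hQ
  exact ⟨fun _ hx => LinearMap.mapsTo_range_of_comp_eq hQ hx,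
    fun _ hx => LinearMap.mapsTo_ker_of_comp_eq hQ hx⟩

theorem stmt3 (A : X →L[ℂ] Y) (B C : Y →L[ℂ] X)
    (h1 : A ∘L B ∘L A ∘L B ∘L A = A ∘L B ∘L A ∘L C ∘L A)
    (h2 : A ∘L B ∘L A ∘L C ∘L A = A ∘L C ∘L A ∘L B ∘L A)
    (h3 : A ∘L C ∘L A ∘L B ∘L A = A ∘L C ∘L A ∘L C ∘L A) (Q : ℂ[X]) :
    (∀ x : X, x ∈ LinearMap.range (Polynomial.aeval (B ∘L A - 1) Q : X →ₗ[ℂ] X) →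
      (A ∘L C ∘L A) x ∈ LinearMap.range (Polynomial.aeval (A ∘L C - 1) Q : Y →ₗ[ℂ] Y)) ∧
    (∀ x : X, x ∈ LinearMap.ker (Polynomial.aeval (B ∘L A - 1) Q : X →ₗ[ℂ] X) →
      (A ∘L C ∘L A) x ∈ LinearMap.ker (Polynomial.aeval (A ∘L C - 1) Q : Y →ₗ[ℂ] Y)) :=
  stmt3_general A B C h3 Q
end

section
/- Let A : X → Y and B, C : Y → X satisfy A(BA)² = ABACA = ACABA = (AC)²A. For each n ∈ ℕ, the linear map Γ from R((BA−I)^n)/R((BA−I)^{n+1}) to R((AC−I)^n)/R((AC−I)^{n+1}) induced by x ↦ ACAx is well-defined and injective; consequently dim R((BA−I)^n)/R((BA−I)^{n+1}) ≤ dim R((AC−I)^n)/R((AC−I)^{n+1}). -/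
/-!
`ACA` intertwines `BA - 1` with `AC - 1` (this is `ACABA = ACACA`), so it maps `R((BA - 1)ᵏ)` into
`R((AC - 1)ᵏ)` and induces `Γ`. For injectivity let `x = (BA - 1)ⁿu` with `ACAx = (AC - 1)ⁿ⁺¹y`.
The hypotheses give `(BA)³ = BACACA` and `(BA)²CA = (BA)³`, whence
`(BA)⁵x = (BA)³(CA - 1)ⁿ⁺¹Cy = (BA - 1)ⁿ⁺¹(BA)³Cy`; and `x - (BA)⁵x ∈ R((BA - 1)ⁿ⁺¹)` because
`BA - 1` divides `1 - (BA)⁵` and `x ∈ R((BA - 1)ⁿ)`.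
-/

open LinearMap Submodule

theorem Submodule.mapQ_injective_of_comap_le {R M N : Type*} [Ring R] [AddCommGroup M] [Module R M]
    [AddCommGroup N] [Module R N] {p : Submodule R M} {q : Submodule R N} {f : M →ₗ[R] N}
    (h : p ≤ q.comap f) (h' : q.comap f ≤ p) : Function.Injective (p.mapQ q f h) := by
  rw [← LinearMap.ker_eq_bot, ker_mapQ, le_antisymm h' h, mkQ_map_self]

theorem Commute.mul_pow_eq_mul_pow_of_mul_eq {S : Type*} [Monoid S] {a p q : S}
    (hc : Commute a p) (h : a * q = a * p) : ∀ j : ℕ, a * q ^ j = a * p ^ j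
  | 0 => by simp
  | j + 1 => by
    calc a * q ^ (j + 1) = a * p ^ j * q := by
          rw [pow_succ, ← mul_assoc, hc.mul_pow_eq_mul_pow_of_mul_eq h j]
      _ = p ^ j * (a * p) := by rw [(hc.pow_right j).eq, mul_assoc, h]
      _ = a * p ^ (j + 1) := by rw [← mul_assoc, ← (hc.pow_right j).eq, mul_assoc, pow_succ]

section Modules

variable {R M N : Type*} [Ring R] [AddCommGroup M] [Module R M] [AddCommGroup N] [Module R N]

theorem Module.End.mem_range_sub_one_pow_succ_of_pow_apply_mem {f : Module.End R M} {n k : ℕ}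
    {x : M} (hx : x ∈ range ((f - 1) ^ n)) (hk : (f ^ k) x ∈ range ((f - 1) ^ (n + 1))) :
    x ∈ range ((f - 1) ^ (n + 1)) := by
  obtain ⟨u, rfl⟩ := hx
  set g := ∑ i ∈ Finset.range k, f ^ i
  have hcomm : Commute ((f - 1) ^ (n + 1)) g :=
    Commute.sum_right _ _ _ fun i _ =>
      (((Commute.refl f).sub_left (Commute.one_left f)).pow_left (n + 1)).pow_right i
  have hgeom : (f ^ k - 1) * (f - 1) ^ n = (f - 1) ^ (n + 1) * g := by
    rw [← geom_sum_mul, mul_assoc, ← pow_succ', hcomm.eq]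
  have hstep : (f ^ k) (((f - 1) ^ n) u) - ((f - 1) ^ n) u = ((f - 1) ^ (n + 1)) (g u) := by
    simpa only [sub_mul, one_mul, LinearMap.sub_apply, Module.End.mul_apply] using
      LinearMap.congr_fun hgeom u
  have hsplit : ((f - 1) ^ n) u = (f ^ k) (((f - 1) ^ n) u) - ((f - 1) ^ (n + 1)) (g u) := by
    rw [← hstep, sub_sub_cancel]
  rw [hsplit]
  exact sub_mem hk (mem_range_self _ _)

theorem LinearMap.apply_mem_range_pow_of_comp_eq {D : M →ₗ[R] N} {f : Module.End R M}
    {g : Module.End R N} (h : g ∘ₗ D = D ∘ₗ f) (k : ℕ) {x : M} (hx : x ∈ range (f ^ k)) :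
    D x ∈ range (g ^ k) := by
  obtain ⟨u, rfl⟩ := hx
  exact ⟨D u, by rw [← comp_apply, Module.End.commute_pow_left_of_commute h, comp_apply]⟩

theorem LinearMap.sub_one_pow_comp_eq_comp_sub_one_pow (f : M →ₗ[R] N) (g : N →ₗ[R] M) (k : ℕ) :
    ((g ∘ₗ f - 1) ^ k) ∘ₗ g = g ∘ₗ (f ∘ₗ g - 1) ^ k :=
  Module.End.commute_pow_left_of_commute (by ext; simp) k

abbrev Module.End.rangePowQuot (f : Module.End R M) (n : ℕ) : Type _ :=
  range (f ^ n) ⧸ (range (f ^ (n + 1))).comap (range (f ^ n)).subtype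

variable {D : M →ₗ[R] N} {f : Module.End R M} {g : Module.End R N}

def LinearMap.rangePowQuotMap (h : g ∘ₗ D = D ∘ₗ f) (n : ℕ) :
    f.rangePowQuot n →ₗ[R] g.rangePowQuot n :=
  Submodule.mapQ _ _ (D.restrict fun _ hx => D.apply_mem_range_pow_of_comp_eq h n hx)
    fun _ hx => D.apply_mem_range_pow_of_comp_eq h (n + 1) hx

theorem LinearMap.rangePowQuotMap_mk (h : g ∘ₗ D = D ∘ₗ f) (n : ℕ) (x : range (f ^ n))
    (hx : D x ∈ range (g ^ n)) :
    D.rangePowQuotMap h n (Submodule.Quotient.mk x) = Submodule.Quotient.mk ⟨D x, hx⟩ :=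
  rfl

theorem LinearMap.rangePowQuotMap_injective (h : g ∘ₗ D = D ∘ₗ f) (n : ℕ)
    (hD : ∀ x ∈ range (f ^ n), D x ∈ range (g ^ (n + 1)) → x ∈ range (f ^ (n + 1))) :
    Function.Injective (D.rangePowQuotMap h n) :=
  Submodule.mapQ_injective_of_comap_le _ fun x hx => hD x x.2 hx

end Modules

namespace JacobsonLemma

variable {R M N : Type*} [Ring R] [AddCommGroup M] [Module R M] [AddCommGroup N] [Module R N]
  {A : M →ₗ[R] N} {B C : N →ₗ[R] M}

theorem sub_one_comp_eq_comp_sub_one (h3 : A ∘ₗ C ∘ₗ A ∘ₗ B ∘ₗ A = A ∘ₗ C ∘ₗ A ∘ₗ C ∘ₗ A) :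
    (A ∘ₗ C - 1) ∘ₗ (A ∘ₗ C ∘ₗ A) = (A ∘ₗ C ∘ₗ A) ∘ₗ (B ∘ₗ A - 1) := by
  simp only [sub_comp, comp_sub, Module.End.one_eq_id, id_comp, comp_id, comp_assoc, h3]

theorem sq_mul_eq_sq_mul (h1 : A ∘ₗ B ∘ₗ A ∘ₗ B ∘ₗ A = A ∘ₗ B ∘ₗ A ∘ₗ C ∘ₗ A) :
    (B ∘ₗ A) ^ 2 * (C ∘ₗ A) = (B ∘ₗ A) ^ 2 * (B ∘ₗ A) := by
  simp only [sq, Module.End.mul_eq_comp, comp_assoc, h1]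

theorem pow_three_eq (h1 : A ∘ₗ B ∘ₗ A ∘ₗ B ∘ₗ A = A ∘ₗ B ∘ₗ A ∘ₗ C ∘ₗ A)
    (h2 : A ∘ₗ B ∘ₗ A ∘ₗ C ∘ₗ A = A ∘ₗ C ∘ₗ A ∘ₗ B ∘ₗ A)
    (h3 : A ∘ₗ C ∘ₗ A ∘ₗ B ∘ₗ A = A ∘ₗ C ∘ₗ A ∘ₗ C ∘ₗ A) :
    (B ∘ₗ A) ^ 3 = B ∘ₗ A ∘ₗ C ∘ₗ A ∘ₗ C ∘ₗ A := by
  simp only [pow_succ, pow_zero, one_mul, Module.End.mul_eq_comp, comp_assoc, h1, h2, h3]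

theorem mem_range_sub_one_pow_succ (h1 : A ∘ₗ B ∘ₗ A ∘ₗ B ∘ₗ A = A ∘ₗ B ∘ₗ A ∘ₗ C ∘ₗ A)
    (h2 : A ∘ₗ B ∘ₗ A ∘ₗ C ∘ₗ A = A ∘ₗ C ∘ₗ A ∘ₗ B ∘ₗ A)
    (h3 : A ∘ₗ C ∘ₗ A ∘ₗ B ∘ₗ A = A ∘ₗ C ∘ₗ A ∘ₗ C ∘ₗ A) {n : ℕ} {x : M}
    (hx : x ∈ range ((B ∘ₗ A - 1) ^ n))
    (hD : (A ∘ₗ C ∘ₗ A) x ∈ range ((A ∘ₗ C - 1) ^ (n + 1))) :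
    x ∈ range ((B ∘ₗ A - 1) ^ (n + 1)) := by
  obtain ⟨y, hy⟩ := hD
  have hp3 : ((B ∘ₗ A) ^ 3) x = (B ∘ₗ A * (C ∘ₗ A - 1) ^ (n + 1) : Module.End R M) (C y) := by
    have hC := LinearMap.congr_fun (A.sub_one_pow_comp_eq_comp_sub_one_pow C (n + 1)) y
    simp only [comp_apply] at hC hy
    rw [pow_three_eq h1 h2 h3, Module.End.mul_apply, hC, hy]
    rfl
  set p := B ∘ₗ A
  set q := C ∘ₗ A
  have hp : Commute (p - 1) p := (Commute.refl p).sub_left (Commute.one_left p)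
  have hpq : p ^ 2 * (q - 1) ^ (n + 1) = p ^ 2 * (p - 1) ^ (n + 1) :=
    ((Commute.refl p).pow_left 2 |>.sub_right (Commute.one_right _)).mul_pow_eq_mul_pow_of_mul_eq
      (by rw [mul_sub, mul_sub, sq_mul_eq_sq_mul h1]) (n + 1)
  refine Module.End.mem_range_sub_one_pow_succ_of_pow_apply_mem (k := 5) hx ⟨(p ^ 3) (C y), ?_⟩
  calc ((p - 1) ^ (n + 1)) ((p ^ 3) (C y))
      = (p * (p ^ 2 * (p - 1) ^ (n + 1)) : Module.End R M) (C y) := by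
        rw [← mul_assoc, ← pow_succ', ← ((hp.pow_left (n + 1)).pow_right 3).eq]
        rfl
    _ = (p ^ 2 * (p * (q - 1) ^ (n + 1)) : Module.End R M) (C y) := by
        rw [← hpq, ← mul_assoc, ← mul_assoc, (Commute.self_pow p 2).eq]
    _ = (p ^ 5) x := by
        rw [Module.End.mul_apply, ← hp3, ← Module.End.mul_apply, ← pow_add]

end JacobsonLemma

theorem ContinuousLinearMap.toLinearMap_comp_sub_one_pow {𝕜 E F : Type*} [NormedField 𝕜]
    [NormedAddCommGroup E] [NormedSpace 𝕜 E] [NormedAddCommGroup F] [NormedSpace 𝕜 F]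
    (f : E →L[𝕜] F) (g : F →L[𝕜] E) (k : ℕ) :
    (((g ∘L f - 1) ^ k : E →L[𝕜] E) : E →ₗ[𝕜] E) =
      ((g : F →ₗ[𝕜] E) ∘ₗ (f : E →ₗ[𝕜] F) - 1) ^ k := by
  rw [toLinearMap_pow, toLinearMap_sub, toLinearMap_comp, toLinearMap_one]

open Polynomial ContinuousLinearMap

universe u

variable {X Y : Type u} [NormedAddCommGroup X] [NormedSpace ℂ X] [CompleteSpace X]
  [NormedAddCommGroup Y] [NormedSpace ℂ Y] [CompleteSpace Y]
theorem stmt4 (A : X →L[ℂ] Y) (B C : Y →L[ℂ] X)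
    (h1 : A ∘L B ∘L A ∘L B ∘L A = A ∘L B ∘L A ∘L C ∘L A)
    (h2 : A ∘L B ∘L A ∘L C ∘L A = A ∘L C ∘L A ∘L B ∘L A)
    (h3 : A ∘L C ∘L A ∘L B ∘L A = A ∘L C ∘L A ∘L C ∘L A) (n : ℕ) :
    (∃ Γ : (LinearMap.range (((B ∘L A - 1) ^ n : X →L[ℂ] X) : X →ₗ[ℂ] X) ⧸
          (LinearMap.range (((B ∘L A - 1) ^ (n + 1) : X →L[ℂ] X) : X →ₗ[ℂ] X)).comap
            (LinearMap.range (((B ∘L A - 1) ^ n : X →L[ℂ] X) : X →ₗ[ℂ] X)).subtype) →ₗ[ℂ]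
        (LinearMap.range (((A ∘L C - 1) ^ n : Y →L[ℂ] Y) : Y →ₗ[ℂ] Y) ⧸
          (LinearMap.range (((A ∘L C - 1) ^ (n + 1) : Y →L[ℂ] Y) : Y →ₗ[ℂ] Y)).comap
            (LinearMap.range (((A ∘L C - 1) ^ n : Y →L[ℂ] Y) : Y →ₗ[ℂ] Y)).subtype),
      Function.Injective Γ ∧
      ∀ (x : LinearMap.range (((B ∘L A - 1) ^ n : X →L[ℂ] X) : X →ₗ[ℂ] X))
        (hx : (A ∘L C ∘L A) (x : X) ∈ LinearMap.range (((A ∘L C - 1) ^ n : Y →L[ℂ] Y) : Y →ₗ[ℂ] Y)),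
        Γ (Submodule.Quotient.mk x) =
          Submodule.Quotient.mk ⟨(A ∘L C ∘L A) (x : X), hx⟩) ∧
    Module.rank ℂ (LinearMap.range (((B ∘L A - 1) ^ n : X →L[ℂ] X) : X →ₗ[ℂ] X) ⧸
        (LinearMap.range (((B ∘L A - 1) ^ (n + 1) : X →L[ℂ] X) : X →ₗ[ℂ] X)).comap
          (LinearMap.range (((B ∘L A - 1) ^ n : X →L[ℂ] X) : X →ₗ[ℂ] X)).subtype) ≤
      Module.rank ℂ (LinearMap.range (((A ∘L C - 1) ^ n : Y →L[ℂ] Y) : Y →ₗ[ℂ] Y) ⧸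
        (LinearMap.range (((A ∘L C - 1) ^ (n + 1) : Y →L[ℂ] Y) : Y →ₗ[ℂ] Y)).comap
          (LinearMap.range (((A ∘L C - 1) ^ n : Y →L[ℂ] Y) : Y →ₗ[ℂ] Y)).subtype) := by
  have h1' := congrArg ContinuousLinearMap.toLinearMap h1
  have h2' := congrArg ContinuousLinearMap.toLinearMap h2
  have h3' := congrArg ContinuousLinearMap.toLinearMap h3
  simp only [toLinearMap_comp] at h1' h2' h3'
  rw [toLinearMap_comp_sub_one_pow A B, toLinearMap_comp_sub_one_pow A B,
    toLinearMap_comp_sub_one_pow C A, toLinearMap_comp_sub_one_pow C A]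
  have hΓ := LinearMap.rangePowQuotMap_injective (JacobsonLemma.sub_one_comp_eq_comp_sub_one h3') n
    fun _ hx hD => JacobsonLemma.mem_range_sub_one_pow_succ h1' h2' h3' hx hD
  exact ⟨⟨_, hΓ, LinearMap.rangePowQuotMap_mk _ n⟩, LinearMap.rank_le_of_injective _ hΓ⟩
end

section
/- Let A : X → Y and B, C : Y → X satisfy A(BA)² = ABACA = ACABA = (AC)²A. Then for all n ∈ ℕ, dim R((AC−I)^n)/R((AC−I)^{n+1}) = dim R((BA−I)^n)/R((BA−I)^{n+1}) (i.e. c_n(AC−I) = c_n(BA−I)). -/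
open Polynomial ContinuousLinearMap

universe u

/-!
With `u = AC`, `u' = BA`, `w = BACAC : Y → X` and `v = ABABA : X → Y`, the hypothesis says that the
four words `ABABA`, `ABACA`, `ACABA`, `ACACA` coincide, whence `w u = u' w`, `v u' = u v`,
`v w = u⁵` and `w v = u'⁵`. Since `u⁵ - 1 = (u - 1) p(u)` for a polynomial `p`, the operator `v w`
acts as the identity on `R((u - 1)ⁿ) / R((u - 1)ⁿ⁺¹)`, and symmetrically for `w v`; so `w` and `v`
induce mutually inverse isomorphisms between the two quotients.
-/

lemma pow_eq_one_add_sub_one_mul_geom_sum {R : Type*} [Ring R] (u : R) (m : ℕ) :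
    u ^ m = 1 + (u - 1) * ∑ i ∈ Finset.range m, u ^ i := by
  rw [mul_geom_sum, add_sub_cancel]

lemma commute_sub_one_geom_sum {R : Type*} [Ring R] (u : R) (m : ℕ) :
    Commute (u - 1) (∑ i ∈ Finset.range m, u ^ i) :=
  Commute.sum_right _ _ _ fun i _ ↦ ((Commute.refl u).pow_right i).sub_left (Commute.one_left _)

namespace Module.End

variable {R M N : Type*} [CommRing R] [AddCommGroup M] [Module R M] [AddCommGroup N] [Module R N]

/-- `R(aⁿ)/R(aⁿ⁺¹)`; its `Module.rank` is the paper's `cₙ(a)`. -/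
abbrev rangePowQuotient (a : Module.End R M) (n : ℕ) : Type _ :=
  LinearMap.range (a ^ n) ⧸
    (LinearMap.range (a ^ (n + 1))).comap (LinearMap.range (a ^ n)).subtype

variable {a : Module.End R M} {b : Module.End R N} {w : M →ₗ[R] N} {v : N →ₗ[R] M}

lemma range_pow_le_comap_of_comp_eq (h : w ∘ₗ a = b ∘ₗ w) (k : ℕ) :
    LinearMap.range (a ^ k) ≤ (LinearMap.range (b ^ k)).comap w := by
  rintro _ ⟨z, rfl⟩
  exact ⟨w z, LinearMap.congr_fun (commute_pow_left_of_commute h.symm k) z⟩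

namespace rangePowQuotient

def map (h : w ∘ₗ a = b ∘ₗ w) (n : ℕ) : rangePowQuotient a n →ₗ[R] rangePowQuotient b n :=
  Submodule.mapQ _ _ (w.restrict (range_pow_le_comap_of_comp_eq h n))
    fun _ hx ↦ range_pow_le_comap_of_comp_eq h (n + 1) hx

lemma map_comp_map_eq_id (hw : w ∘ₗ a = b ∘ₗ w) (hv : v ∘ₗ b = a ∘ₗ v)
    {s : Module.End R M} (hs : Commute a s) (hvw : v ∘ₗ w = 1 + a * s) (n : ℕ) :
    map hv n ∘ₗ map hw n = LinearMap.id := by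
  refine Submodule.linearMap_qext _ (LinearMap.ext ?_)
  rintro ⟨_, z, rfl⟩
  refine (Submodule.Quotient.eq _).2 ⟨s z, ?_⟩
  have key : a ^ (n + 1) * s = (v ∘ₗ w) * a ^ n - a ^ n := by
    rw [hvw, add_mul, one_mul, add_sub_cancel_left, pow_succ', mul_assoc, mul_assoc,
      (hs.pow_left n).eq]
  simpa [map] using LinearMap.congr_fun key z

def equivOfComp (hw : w ∘ₗ a = b ∘ₗ w) (hv : v ∘ₗ b = a ∘ₗ v)
    {s : Module.End R M} (hs : Commute a s) (hvw : v ∘ₗ w = 1 + a * s)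
    {t : Module.End R N} (ht : Commute b t) (hwv : w ∘ₗ v = 1 + b * t) (n : ℕ) :
    rangePowQuotient a n ≃ₗ[R] rangePowQuotient b n :=
  LinearEquiv.ofLinearMap (map hw n) (map hv n) (map_comp_map_eq_id hv hw ht hwv n)
    (map_comp_map_eq_id hw hv hs hvw n)

/-- For `m = 1` this is `cₙ(ST - I) = cₙ(TS - I)`. -/
def subOneEquivOfCompEqPow {u : Module.End R M} {u' : Module.End R N}
    (hw : w ∘ₗ u = u' ∘ₗ w) (hv : v ∘ₗ u' = u ∘ₗ v) (m : ℕ) (hvw : v ∘ₗ w = u ^ m)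
    (hwv : w ∘ₗ v = u' ^ m) (n : ℕ) :
    rangePowQuotient (u - 1) n ≃ₗ[R] rangePowQuotient (u' - 1) n :=
  equivOfComp (by rw [LinearMap.comp_sub, LinearMap.sub_comp, hw]; rfl)
    (by rw [LinearMap.comp_sub, LinearMap.sub_comp, hv]; rfl)
    (commute_sub_one_geom_sum u m) (hvw.trans (pow_eq_one_add_sub_one_mul_geom_sum u m))
    (commute_sub_one_geom_sum u' m) (hwv.trans (pow_eq_one_add_sub_one_mul_geom_sum u' m)) n

end rangePowQuotient

end Module.End

variable {X Y : Type u} [NormedAddCommGroup X] [NormedSpace ℂ X] [CompleteSpace X]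
  [NormedAddCommGroup Y] [NormedSpace ℂ Y] [CompleteSpace Y]
theorem stmt5 (A : X →L[ℂ] Y) (B C : Y →L[ℂ] X)
    (h1 : A ∘L B ∘L A ∘L B ∘L A = A ∘L B ∘L A ∘L C ∘L A)
    (h2 : A ∘L B ∘L A ∘L C ∘L A = A ∘L C ∘L A ∘L B ∘L A)
    (h3 : A ∘L C ∘L A ∘L B ∘L A = A ∘L C ∘L A ∘L C ∘L A) (n : ℕ) :
    Module.rank ℂ (LinearMap.range (((A ∘L C - 1) ^ n : Y →L[ℂ] Y) : Y →ₗ[ℂ] Y) ⧸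
        (LinearMap.range (((A ∘L C - 1) ^ (n + 1) : Y →L[ℂ] Y) : Y →ₗ[ℂ] Y)).comap
          (LinearMap.range (((A ∘L C - 1) ^ n : Y →L[ℂ] Y) : Y →ₗ[ℂ] Y)).subtype) =
      Module.rank ℂ (LinearMap.range (((B ∘L A - 1) ^ n : X →L[ℂ] X) : X →ₗ[ℂ] X) ⧸
        (LinearMap.range (((B ∘L A - 1) ^ (n + 1) : X →L[ℂ] X) : X →ₗ[ℂ] X)).comap
          (LinearMap.range (((B ∘L A - 1) ^ n : X →L[ℂ] X) : X →ₗ[ℂ] X)).subtype) := by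
  have hBB_CC (x : X) : A (B (A (B (A x)))) = A (C (A (C (A x)))) := by
    simpa using congr($(h1.trans (h2.trans h3)) x)
  have hBC_CC (x : X) : A (B (A (C (A x)))) = A (C (A (C (A x)))) := by
    simpa using congr($(h2.trans h3) x)
  have hBB_CB (x : X) : A (B (A (B (A x)))) = A (C (A (B (A x)))) := by
    simpa using congr($(h1.trans h2) x)
  let w : Y →ₗ[ℂ] X := ((B ∘L A ∘L C ∘L A ∘L C : Y →L[ℂ] X) : Y →ₗ[ℂ] X)
  let v : X →ₗ[ℂ] Y := ((A ∘L B ∘L A ∘L B ∘L A : X →L[ℂ] Y) : X →ₗ[ℂ] Y)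
  have hw : w ∘ₗ (A ∘L C : Y →L[ℂ] Y) = (B ∘L A : X →L[ℂ] X) ∘ₗ w :=
    LinearMap.ext fun y ↦ by simpa [w] using congrArg B (hBC_CC (C y)).symm
  have hv : v ∘ₗ (B ∘L A : X →L[ℂ] X) = (A ∘L C : Y →L[ℂ] Y) ∘ₗ v :=
    LinearMap.ext fun x ↦ by simpa [v] using hBB_CB (B (A x))
  have hvw : v ∘ₗ w = ((A ∘L C : Y →L[ℂ] Y) : Y →ₗ[ℂ] Y) ^ 5 :=
    LinearMap.ext fun y ↦ by simp [v, w, hBC_CC, pow_succ]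
  have hwv : w ∘ₗ v = ((B ∘L A : X →L[ℂ] X) : X →ₗ[ℂ] X) ^ 5 :=
    LinearMap.ext fun x ↦ by simp [v, w, ← hBB_CC, pow_succ]
  rw [toLinearMap_pow, toLinearMap_pow, toLinearMap_pow, toLinearMap_pow, toLinearMap_sub,
    toLinearMap_sub, toLinearMap_one, toLinearMap_one]
  exact (Module.End.rangePowQuotient.subOneEquivOfCompEqPow hw hv 5 hvw hwv n).rank_eq
end

section
/- Let A : X → Y and B, C : Y → X satisfy A(BA)² = ABACA = ACABA = (AC)²A. For each n ∈ ℕ, the linear map Ψ from N((BA−I)^{n+1})/N((BA−I)^n) to N((AC−I)^{n+1})/N((AC−I)^n) induced by x ↦ ACAx is well-defined and injective. -/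
/-!
Because `ACA ∘ BA = AC ∘ ACA` (the third identity), `ACA` intertwines `BA - 1` with `AC - 1`,
so it maps each `N((BA - I)^k)` into `N((AC - I)^k)` and induces `Ψ`. A map intertwining `φ`
with `ψ` induces an injective map `N(φ^{n+1})/N(φ^n) → N(ψ^{n+1})/N(ψ^n)` as soon as it is
injective on `N(φ)`: apply `φ^n`. Finally `ACA` is injective on the fixed points of `BA`,
since for `BAx = x` the first identity gives `x = (BA)³x = B(ABACA x)`.
-/

open Polynomial ContinuousLinearMap

variable {X Y : Type*} [NormedAddCommGroup X] [NormedSpace ℂ X] [CompleteSpace X]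
  [NormedAddCommGroup Y] [NormedSpace ℂ Y] [CompleteSpace Y]

namespace LinearMap

variable {R M N : Type*} [Ring R] [AddCommGroup M] [Module R M] [AddCommGroup N] [Module R N]
  {f : M →ₗ[R] N} {φ : Module.End R M} {ψ : Module.End R N}

theorem sub_one_comp_eq_comp_sub_one (h : ψ ∘ₗ f = f ∘ₗ φ) : (ψ - 1) ∘ₗ f = f ∘ₗ (φ - 1) := by
  rw [sub_comp, comp_sub, h]
  rfl

theorem pow_comp_eq_comp_pow (h : ψ ∘ₗ f = f ∘ₗ φ) (k : ℕ) : (ψ ^ k) ∘ₗ f = f ∘ₗ (φ ^ k) := by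
  induction k with
  | zero => rfl
  | succ k ih => rw [pow_succ, pow_succ, Module.End.mul_eq_comp, Module.End.mul_eq_comp,
      comp_assoc, h, ← comp_assoc, ih, comp_assoc]

theorem map_mem_ker_pow_of_comp_eq (h : ψ ∘ₗ f = f ∘ₗ φ) (k : ℕ) {x : M}
    (hx : x ∈ ker (φ ^ k)) : f x ∈ ker (ψ ^ k) := by
  rw [mem_ker] at hx ⊢
  rw [← comp_apply, pow_comp_eq_comp_pow h, comp_apply, hx, map_zero]

def kerPowSuccQuotMap (h : ψ ∘ₗ f = f ∘ₗ φ) (n : ℕ) :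
    (ker (φ ^ (n + 1)) ⧸ (ker (φ ^ n)).comap (ker (φ ^ (n + 1))).subtype) →ₗ[R]
      (ker (ψ ^ (n + 1)) ⧸ (ker (ψ ^ n)).comap (ker (ψ ^ (n + 1))).subtype) :=
  Submodule.mapQ _ _ (f.restrict fun _ => map_mem_ker_pow_of_comp_eq h (n + 1))
    fun _ hx => by exact map_mem_ker_pow_of_comp_eq h n hx

theorem kerPowSuccQuotMap_mk (h : ψ ∘ₗ f = f ∘ₗ φ) (n : ℕ) (x : ker (φ ^ (n + 1)))
    (hx : f x ∈ ker (ψ ^ (n + 1))) :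
    kerPowSuccQuotMap h n (Submodule.Quotient.mk x) = Submodule.Quotient.mk ⟨f x, hx⟩ :=
  rfl

theorem kerPowSuccQuotMap_injective (h : ψ ∘ₗ f = f ∘ₗ φ) (hf : Disjoint (ker φ) (ker f))
    (n : ℕ) : Function.Injective (kerPowSuccQuotMap h n) := by
  rw [← ker_eq_bot, ker_eq_bot']
  intro q hq
  obtain ⟨x, rfl⟩ := Submodule.Quotient.mk_surjective _ q
  rw [kerPowSuccQuotMap_mk h n x (map_mem_ker_pow_of_comp_eq h _ x.2),
    Submodule.Quotient.mk_eq_zero] at hq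
  rw [Submodule.Quotient.mk_eq_zero, Submodule.mem_comap, Submodule.subtype_apply, mem_ker]
  refine disjoint_ker.mp hf _ ?_ ?_
  · rw [mem_ker, ← Module.End.mul_apply, ← pow_succ', x.2]
  · rw [← comp_apply, ← pow_comp_eq_comp_pow h]
    exact hq

theorem disjoint_ker_comp_sub_one_ker_comp_comp {A : M →ₗ[R] N} {B C : N →ₗ[R] M}
    (h : A ∘ₗ B ∘ₗ A ∘ₗ B ∘ₗ A = A ∘ₗ B ∘ₗ A ∘ₗ C ∘ₗ A) :
    Disjoint (ker (B ∘ₗ A - 1)) (ker (A ∘ₗ C ∘ₗ A)) := by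
  refine disjoint_ker.mpr fun x hx (hACA : A (C (A x)) = 0) => ?_
  have hfix : B (A x) = x := sub_eq_zero.mp hx
  calc x = B (A (B (A (B (A x))))) := by rw [hfix, hfix, hfix]
    _ = B (A (B (A (C (A x))))) := congrArg B (LinearMap.congr_fun h x)
    _ = 0 := by rw [hACA, map_zero, map_zero, map_zero]

end LinearMap

theorem stmt6_general (A : X →L[ℂ] Y) (B C : Y →L[ℂ] X)
    (h1 : A ∘L B ∘L A ∘L B ∘L A = A ∘L B ∘L A ∘L C ∘L A)
    (h3 : A ∘L C ∘L A ∘L B ∘L A = A ∘L C ∘L A ∘L C ∘L A) (n : ℕ) :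
    ∃ Ψ : (LinearMap.ker (((B ∘L A - 1) ^ (n + 1) : X →L[ℂ] X) : X →ₗ[ℂ] X) ⧸
          (LinearMap.ker (((B ∘L A - 1) ^ n : X →L[ℂ] X) : X →ₗ[ℂ] X)).comap
            (LinearMap.ker (((B ∘L A - 1) ^ (n + 1) : X →L[ℂ] X) : X →ₗ[ℂ] X)).subtype) →ₗ[ℂ]
        (LinearMap.ker (((A ∘L C - 1) ^ (n + 1) : Y →L[ℂ] Y) : Y →ₗ[ℂ] Y) ⧸
          (LinearMap.ker (((A ∘L C - 1) ^ n : Y →L[ℂ] Y) : Y →ₗ[ℂ] Y)).comap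
            (LinearMap.ker (((A ∘L C - 1) ^ (n + 1) : Y →L[ℂ] Y) : Y →ₗ[ℂ] Y)).subtype),
      Function.Injective Ψ ∧
      ∀ (x : LinearMap.ker (((B ∘L A - 1) ^ (n + 1) : X →L[ℂ] X) : X →ₗ[ℂ] X))
        (hx : (A ∘L C ∘L A) (x : X) ∈ LinearMap.ker (((A ∘L C - 1) ^ (n + 1) : Y →L[ℂ] Y) : Y →ₗ[ℂ] Y)),
        Ψ (Submodule.Quotient.mk x) =
          Submodule.Quotient.mk ⟨(A ∘L C ∘L A) (x : X), hx⟩ := by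
  have hcomm : ((A ∘L C - 1 : Y →L[ℂ] Y) : Y →ₗ[ℂ] Y) ∘ₗ (A ∘L C ∘L A : X →L[ℂ] Y) =
      (A ∘L C ∘L A : X →L[ℂ] Y) ∘ₗ ((B ∘L A - 1 : X →L[ℂ] X) : X →ₗ[ℂ] X) :=
    LinearMap.sub_one_comp_eq_comp_sub_one (congrArg toLinearMap h3).symm
  have hdisj := LinearMap.disjoint_ker_comp_sub_one_ker_comp_comp (congrArg toLinearMap h1)
  rw [toLinearMap_pow, toLinearMap_pow, toLinearMap_pow, toLinearMap_pow]
  exact ⟨LinearMap.kerPowSuccQuotMap hcomm n, LinearMap.kerPowSuccQuotMap_injective hcomm hdisj n,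
    LinearMap.kerPowSuccQuotMap_mk hcomm n⟩

theorem stmt6 (A : X →L[ℂ] Y) (B C : Y →L[ℂ] X)
    (h1 : A ∘L B ∘L A ∘L B ∘L A = A ∘L B ∘L A ∘L C ∘L A)
    (h2 : A ∘L B ∘L A ∘L C ∘L A = A ∘L C ∘L A ∘L B ∘L A)
    (h3 : A ∘L C ∘L A ∘L B ∘L A = A ∘L C ∘L A ∘L C ∘L A) (n : ℕ) :
    ∃ Ψ : (LinearMap.ker (((B ∘L A - 1) ^ (n + 1) : X →L[ℂ] X) : X →ₗ[ℂ] X) ⧸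
          (LinearMap.ker (((B ∘L A - 1) ^ n : X →L[ℂ] X) : X →ₗ[ℂ] X)).comap
            (LinearMap.ker (((B ∘L A - 1) ^ (n + 1) : X →L[ℂ] X) : X →ₗ[ℂ] X)).subtype) →ₗ[ℂ]
        (LinearMap.ker (((A ∘L C - 1) ^ (n + 1) : Y →L[ℂ] Y) : Y →ₗ[ℂ] Y) ⧸
          (LinearMap.ker (((A ∘L C - 1) ^ n : Y →L[ℂ] Y) : Y →ₗ[ℂ] Y)).comap
            (LinearMap.ker (((A ∘L C - 1) ^ (n + 1) : Y →L[ℂ] Y) : Y →ₗ[ℂ] Y)).subtype),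
      Function.Injective Ψ ∧
      ∀ (x : LinearMap.ker (((B ∘L A - 1) ^ (n + 1) : X →L[ℂ] X) : X →ₗ[ℂ] X))
        (hx : (A ∘L C ∘L A) (x : X) ∈ LinearMap.ker (((A ∘L C - 1) ^ (n + 1) : Y →L[ℂ] Y) : Y →ₗ[ℂ] Y)),
        Ψ (Submodule.Quotient.mk x) =
          Submodule.Quotient.mk ⟨(A ∘L C ∘L A) (x : X), hx⟩ :=
  stmt6_general A B C h1 h3 n
end

section
/- Let A : X → Y and B, C : Y → X satisfy A(BA)² = ABACA = ACABA = (AC)²A. Then for all n ∈ ℕ, dim N((AC−I)^{n+1})/N((AC−I)^n) = dim N((BA−I)^{n+1})/N((BA−I)^n) (i.e. c'_n(AC−I) = c'_n(BA−I)). -/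
/-!
If `φ`, `ψ` intertwine `S` and `T` and `ψφ = Sᵏ`, then `φ` induces an injection
`N((S - I)ⁿ⁺¹)/N((S - I)ⁿ) → N((T - I)ⁿ⁺¹)/N((T - I)ⁿ)`, because `Sᵏ - I` is a multiple of
`S - I`. With `φ = C`, `ψ = A` (`k = 1`) this compares `AC` and `CA`; under the hypothesis,
`φ = BACA` and `ψ = CABA` intertwine `CA` and `BA` with `ψφ = (CA)⁴` and `φψ = (BA)⁴`.
-/

universe v

theorem sub_one_pow_mul_pow {S : Type*} [Ring S] (a : S) (n k : ℕ) :
    (a - 1) ^ n * a ^ k = (a - 1) ^ n + (∑ i ∈ Finset.range k, a ^ i) * (a - 1) ^ (n + 1) := by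
  have hcomm : Commute (a - 1) (∑ i ∈ Finset.range k, a ^ i) :=
    (mul_geom_sum a k).trans (geom_sum_mul a k).symm
  rw [← add_sub_cancel (1 : S) (a ^ k), ← geom_sum_mul, mul_add, mul_one, ← mul_assoc,
    (hcomm.pow_left n).eq, mul_assoc, ← pow_succ]

section IntertwinedOperators

open LinearMap

variable {R : Type*} {M N : Type*} [Ring R] [AddCommGroup M] [Module R M]
  [AddCommGroup N] [Module R N]

/-- The space `N(Tⁿ⁺¹)/N(Tⁿ)`, whose dimension is `c'_n(T)`. -/
abbrev kerPowQuotient (T : Module.End R M) (n : ℕ) : Type _ :=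
  ker (T ^ (n + 1)) ⧸ (ker (T ^ n)).comap (ker (T ^ (n + 1))).subtype

theorem sub_one_pow_apply_eq_zero_of_comp_eq {f : Module.End R M} {g : Module.End R N}
    {φ : M →ₗ[R] N} (hφ : g ∘ₗ φ = φ ∘ₗ f) {j : ℕ} {x : M} (hx : ((f - 1) ^ j) x = 0) :
    ((g - 1) ^ j) (φ x) = 0 := by
  have hφ₁ : (g - 1) ∘ₗ φ = φ ∘ₗ (f - 1) := by
    simp only [sub_comp, comp_sub, hφ, Module.End.one_eq_id, id_comp, comp_id]
  rw [← comp_apply, Module.End.commute_pow_left_of_commute hφ₁ j, comp_apply, hx, map_zero]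

theorem sub_one_pow_pow_apply_of_apply_eq_zero {f : Module.End R M} {n : ℕ} (k : ℕ) {x : M}
    (hx : ((f - 1) ^ (n + 1)) x = 0) : ((f - 1) ^ n) ((f ^ k) x) = ((f - 1) ^ n) x := by
  rw [← Module.End.mul_apply, sub_one_pow_mul_pow, LinearMap.add_apply, Module.End.mul_apply, hx,
    map_zero, add_zero]

end IntertwinedOperators

section RankComparison

open LinearMap

variable {R : Type*} {M N : Type v} [Ring R] [AddCommGroup M] [Module R M]
  [AddCommGroup N] [Module R N]

theorem rank_kerPowQuotient_le_of_comp_eq {f : Module.End R M} {g : Module.End R N}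
    {φ : M →ₗ[R] N} {ψ : N →ₗ[R] M} (hφ : g ∘ₗ φ = φ ∘ₗ f) (hψ : f ∘ₗ ψ = ψ ∘ₗ g) {k : ℕ}
    (hk : ψ ∘ₗ φ = f ^ k) (n : ℕ) :
    Module.rank R (kerPowQuotient (f - 1) n) ≤ Module.rank R (kerPowQuotient (g - 1) n) := by
  let φ' : ker ((f - 1) ^ (n + 1)) →ₗ[R] ker ((g - 1) ^ (n + 1)) :=
    φ.restrict fun _ ↦ sub_one_pow_apply_eq_zero_of_comp_eq hφ
  refine rank_le_of_injective (Submodule.mapQ _ _ φ' fun x hx ↦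
    sub_one_pow_apply_eq_zero_of_comp_eq hφ (x := x.1) hx)
    (ker_eq_bot.mp (Submodule.ker_liftQ_eq_bot _ _ _ ?_))
  rintro ⟨x, hx⟩ hφx
  have hψφx : ((f - 1) ^ n) (ψ (φ x)) = 0 :=
    sub_one_pow_apply_eq_zero_of_comp_eq hψ ((Submodule.Quotient.mk_eq_zero _).mp hφx)
  rwa [← comp_apply ψ φ, hk, sub_one_pow_pow_apply_of_apply_eq_zero k hx] at hψφx

theorem rank_kerPowQuotient_comp_sub_one_eq (a : M →ₗ[R] N) (b : N →ₗ[R] M) (n : ℕ) :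
    Module.rank R (kerPowQuotient (a ∘ₗ b - 1) n) =
      Module.rank R (kerPowQuotient (b ∘ₗ a - 1) n) :=
  le_antisymm
    (rank_kerPowQuotient_le_of_comp_eq (φ := b) (ψ := a) rfl rfl (pow_one _).symm n)
    (rank_kerPowQuotient_le_of_comp_eq (φ := a) (ψ := b) rfl rfl (pow_one _).symm n)

theorem rank_kerPowQuotient_comp_sub_one_eq_of_comp_eq (a : M →ₗ[R] N) (b c : N →ₗ[R] M)
    (h₁ : a ∘ₗ b ∘ₗ a ∘ₗ b ∘ₗ a = a ∘ₗ b ∘ₗ a ∘ₗ c ∘ₗ a)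
    (h₂ : a ∘ₗ b ∘ₗ a ∘ₗ c ∘ₗ a = a ∘ₗ c ∘ₗ a ∘ₗ b ∘ₗ a)
    (h₃ : a ∘ₗ c ∘ₗ a ∘ₗ b ∘ₗ a = a ∘ₗ c ∘ₗ a ∘ₗ c ∘ₗ a) (n : ℕ) :
    Module.rank R (kerPowQuotient (c ∘ₗ a - 1) n) =
      Module.rank R (kerPowQuotient (b ∘ₗ a - 1) n) := by
  simp only [LinearMap.ext_iff, comp_apply] at h₁ h₂ h₃
  have hφ : (b ∘ₗ a) ∘ₗ (b ∘ₗ a ∘ₗ c ∘ₗ a) = (b ∘ₗ a ∘ₗ c ∘ₗ a) ∘ₗ (c ∘ₗ a) := by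
    ext x; simp only [comp_apply]; rw [h₂, h₃]
  have hψ : (c ∘ₗ a) ∘ₗ (c ∘ₗ a ∘ₗ b ∘ₗ a) = (c ∘ₗ a ∘ₗ b ∘ₗ a) ∘ₗ (b ∘ₗ a) := by
    ext x; simp only [comp_apply]; rw [← h₂, ← h₁]
  have hψφ : (c ∘ₗ a ∘ₗ b ∘ₗ a) ∘ₗ (b ∘ₗ a ∘ₗ c ∘ₗ a) = (c ∘ₗ a) ^ 4 := by
    ext x; simp only [comp_apply, pow_succ, pow_zero, Module.End.mul_apply, Module.End.one_apply]
    rw [h₁, h₂, h₃]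
  have hφψ : (b ∘ₗ a ∘ₗ c ∘ₗ a) ∘ₗ (c ∘ₗ a ∘ₗ b ∘ₗ a) = (b ∘ₗ a) ^ 4 := by
    ext x; simp only [comp_apply, pow_succ, pow_zero, Module.End.mul_apply, Module.End.one_apply]
    rw [← h₃, ← h₂, ← h₂, ← h₁]
  exact le_antisymm (rank_kerPowQuotient_le_of_comp_eq hφ hψ hψφ n)
    (rank_kerPowQuotient_le_of_comp_eq hψ hφ hφψ n)

end RankComparison

open ContinuousLinearMap

universe u

variable {X Y : Type u} [NormedAddCommGroup X] [NormedSpace ℂ X] [CompleteSpace X]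
  [NormedAddCommGroup Y] [NormedSpace ℂ Y] [CompleteSpace Y]
theorem stmt7 (A : X →L[ℂ] Y) (B C : Y →L[ℂ] X)
    (h1 : A ∘L B ∘L A ∘L B ∘L A = A ∘L B ∘L A ∘L C ∘L A)
    (h2 : A ∘L B ∘L A ∘L C ∘L A = A ∘L C ∘L A ∘L B ∘L A)
    (h3 : A ∘L C ∘L A ∘L B ∘L A = A ∘L C ∘L A ∘L C ∘L A) (n : ℕ) :
    Module.rank ℂ (LinearMap.ker (((A ∘L C - 1) ^ (n + 1) : Y →L[ℂ] Y) : Y →ₗ[ℂ] Y) ⧸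
        (LinearMap.ker (((A ∘L C - 1) ^ n : Y →L[ℂ] Y) : Y →ₗ[ℂ] Y)).comap
          (LinearMap.ker (((A ∘L C - 1) ^ (n + 1) : Y →L[ℂ] Y) : Y →ₗ[ℂ] Y)).subtype) =
      Module.rank ℂ (LinearMap.ker (((B ∘L A - 1) ^ (n + 1) : X →L[ℂ] X) : X →ₗ[ℂ] X) ⧸
        (LinearMap.ker (((B ∘L A - 1) ^ n : X →L[ℂ] X) : X →ₗ[ℂ] X)).comap
          (LinearMap.ker (((B ∘L A - 1) ^ (n + 1) : X →L[ℂ] X) : X →ₗ[ℂ] X)).subtype) := by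
  -- `rw` rather than `simp`: the operators also occur in the type whose rank is taken.
  rw [toLinearMap_pow, toLinearMap_pow, toLinearMap_pow, toLinearMap_pow, toLinearMap_sub,
    toLinearMap_sub, toLinearMap_comp, toLinearMap_comp, toLinearMap_one, toLinearMap_one]
  replace h1 := congr(($h1 : X →ₗ[ℂ] Y))
  replace h2 := congr(($h2 : X →ₗ[ℂ] Y))
  replace h3 := congr(($h3 : X →ₗ[ℂ] Y))
  simp only [toLinearMap_comp] at h1 h2 h3
  exact (rank_kerPowQuotient_comp_sub_one_eq (A : X →ₗ[ℂ] Y) C n).trans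
    (rank_kerPowQuotient_comp_sub_one_eq_of_comp_eq _ _ _ h1 h2 h3 n)
end

section
/- Let A : X → Y and B, C : Y → X satisfy A(BA)² = ABACA = ACABA = (AC)²A. Then AC − I has finite ascent if and only if BA − I has finite ascent, and in that case their ascents are equal. -/
/-!
If `P ∘ S = T ∘ P` and `ker S ∩ ker P = 0`, then `ker Tⁿ = ker Tⁿ⁺¹` forces
`ker Sⁿ = ker Sⁿ⁺¹`: for `Sⁿ⁺¹ x = 0`, the vector `z = Sⁿ x` satisfies `S z = 0` and
`P z = 0`. With `P = U` this transfers the condition from `UV - 1` to `VU - 1` (Jacobson's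
lemma). With `P = ACA`, `S = BA - 1`, `T = AC - 1` it transfers it from `AC - 1` to `BA - 1`:
if `BAz = z` and `ACAz = 0` then `Az = A(BA)²z = (AC)²Az = 0`, so `z = BAz = 0`. The converse
goes `BA - 1 → AB - 1 → CA - 1 → AC - 1`, the middle step being the previous one with `B` and
`C` exchanged, under which the hypotheses are symmetric. So the two conditions agree for every
`n`, hence so do their least witnesses.
-/

open Polynomial ContinuousLinearMap

namespace LinearMap

variable {R X Y : Type*} [Semiring R] [AddCommGroup X] [Module R X] [AddCommGroup Y] [Module R Y]

theorem ker_pow_eq_ker_pow_succ_of_semiconj {P : X →ₗ[R] Y} {S : Module.End R X}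
    {T : Module.End R Y} (hPST : T ∘ₗ P = P ∘ₗ S) (hdisj : Disjoint (ker S) (ker P)) {n : ℕ}
    (hT : ker (T ^ n) = ker (T ^ (n + 1))) : ker (S ^ n) = ker (S ^ (n + 1)) := by
  refine le_antisymm (fun x hx ↦ Module.End.pow_map_zero_of_le n.le_succ hx) fun x hx ↦ ?_
  have hPST_pow (k : ℕ) (y : X) : (T ^ k) (P y) = P ((S ^ k) y) :=
    congr($(Module.End.commute_pow_left_of_commute hPST k) y)
  have hPx : P x ∈ ker (T ^ (n + 1)) := by
    rw [mem_ker, hPST_pow, mem_ker.1 hx, map_zero]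
  rw [← hT, mem_ker, hPST_pow] at hPx
  have hSx : S ((S ^ n) x) = 0 := by rwa [← Module.End.mul_apply, ← pow_succ']
  exact Submodule.disjoint_def.1 hdisj _ hSx hPx

theorem ker_pow_comp_sub_one_eq_succ_comm (U : X →ₗ[R] Y) (V : Y →ₗ[R] X) {n : ℕ}
    (h : ker ((U ∘ₗ V - 1) ^ n) = ker ((U ∘ₗ V - 1) ^ (n + 1))) :
    ker ((V ∘ₗ U - 1) ^ n) = ker ((V ∘ₗ U - 1) ^ (n + 1)) := by
  refine ker_pow_eq_ker_pow_succ_of_semiconj (P := U) ?_ ?_ h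
  · ext x; simp
  · refine Submodule.disjoint_def.2 fun z hSz hUz ↦ ?_
    rwa [mem_ker, sub_apply, comp_apply, hUz, map_zero, Module.End.one_apply, zero_sub,
      neg_eq_zero] at hSz

theorem ker_pow_comp_sub_one_eq_succ_of_comp_eq (A : X →ₗ[R] Y) (B C : Y →ₗ[R] X)
    (hsemiconj : A ∘ₗ C ∘ₗ A ∘ₗ B ∘ₗ A = A ∘ₗ C ∘ₗ A ∘ₗ C ∘ₗ A)
    (hsquare : A ∘ₗ B ∘ₗ A ∘ₗ B ∘ₗ A = A ∘ₗ C ∘ₗ A ∘ₗ C ∘ₗ A) {n : ℕ}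
    (h : ker ((A ∘ₗ C - 1) ^ n) = ker ((A ∘ₗ C - 1) ^ (n + 1))) :
    ker ((B ∘ₗ A - 1) ^ n) = ker ((B ∘ₗ A - 1) ^ (n + 1)) := by
  refine ker_pow_eq_ker_pow_succ_of_semiconj (P := A ∘ₗ C ∘ₗ A) ?_ ?_ h
  · ext x
    simpa using congr($hsemiconj x).symm
  · refine Submodule.disjoint_def.2 fun z hSz hPz ↦ ?_
    rw [mem_ker, sub_apply, comp_apply, Module.End.one_apply, sub_eq_zero] at hSz
    have hPz : A (C (A z)) = 0 := hPz
    have hAz : A z = 0 := by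
      simpa [hSz, hPz] using congr($hsquare z)
    rw [← hSz, hAz, map_zero]

theorem ker_pow_comp_sub_one_eq_succ_iff (A : X →ₗ[R] Y) (B C : Y →ₗ[R] X)
    (h1 : A ∘ₗ B ∘ₗ A ∘ₗ B ∘ₗ A = A ∘ₗ B ∘ₗ A ∘ₗ C ∘ₗ A)
    (h2 : A ∘ₗ B ∘ₗ A ∘ₗ C ∘ₗ A = A ∘ₗ C ∘ₗ A ∘ₗ B ∘ₗ A)
    (h3 : A ∘ₗ C ∘ₗ A ∘ₗ B ∘ₗ A = A ∘ₗ C ∘ₗ A ∘ₗ C ∘ₗ A) (n : ℕ) :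
    ker ((A ∘ₗ C - 1) ^ n) = ker ((A ∘ₗ C - 1) ^ (n + 1)) ↔
      ker ((B ∘ₗ A - 1) ^ n) = ker ((B ∘ₗ A - 1) ^ (n + 1)) := by
  have h13 := h1.trans (h2.trans h3)
  refine ⟨ker_pow_comp_sub_one_eq_succ_of_comp_eq A B C h3 h13, fun h ↦ ?_⟩
  exact ker_pow_comp_sub_one_eq_succ_comm C A <| ker_pow_comp_sub_one_eq_succ_of_comp_eq A C B
    h1.symm h13.symm <| ker_pow_comp_sub_one_eq_succ_comm B A h

end LinearMap

variable {X Y : Type*} [NormedAddCommGroup X] [NormedSpace ℂ X] [CompleteSpace X]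
  [NormedAddCommGroup Y] [NormedSpace ℂ Y] [CompleteSpace Y]
theorem stmt8 (A : X →L[ℂ] Y) (B C : Y →L[ℂ] X)
    (h1 : A ∘L B ∘L A ∘L B ∘L A = A ∘L B ∘L A ∘L C ∘L A)
    (h2 : A ∘L B ∘L A ∘L C ∘L A = A ∘L C ∘L A ∘L B ∘L A)
    (h3 : A ∘L C ∘L A ∘L B ∘L A = A ∘L C ∘L A ∘L C ∘L A) :
    ((∃ n : ℕ, LinearMap.ker ((((A ∘L C - 1) ^ n : Y →L[ℂ] Y) : Y →ₗ[ℂ] Y)) = LinearMap.ker ((((A ∘L C - 1) ^ (n + 1) : Y →L[ℂ] Y) : Y →ₗ[ℂ] Y))) ↔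
      (∃ n : ℕ, LinearMap.ker ((((B ∘L A - 1) ^ n : X →L[ℂ] X) : X →ₗ[ℂ] X)) = LinearMap.ker ((((B ∘L A - 1) ^ (n + 1) : X →L[ℂ] X) : X →ₗ[ℂ] X)))) ∧
    ((∃ n : ℕ, LinearMap.ker ((((A ∘L C - 1) ^ n : Y →L[ℂ] Y) : Y →ₗ[ℂ] Y)) = LinearMap.ker ((((A ∘L C - 1) ^ (n + 1) : Y →L[ℂ] Y) : Y →ₗ[ℂ] Y))) →
      sInf {n : ℕ | LinearMap.ker ((((A ∘L C - 1) ^ n : Y →L[ℂ] Y) : Y →ₗ[ℂ] Y)) = LinearMap.ker ((((A ∘L C - 1) ^ (n + 1) : Y →L[ℂ] Y) : Y →ₗ[ℂ] Y))} =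
        sInf {n : ℕ | LinearMap.ker ((((B ∘L A - 1) ^ n : X →L[ℂ] X) : X →ₗ[ℂ] X)) = LinearMap.ker ((((B ∘L A - 1) ^ (n + 1) : X →L[ℂ] X) : X →ₗ[ℂ] X))}) := by
  have key (n : ℕ) := LinearMap.ker_pow_comp_sub_one_eq_succ_iff (A : X →ₗ[ℂ] Y) B C
    congr(($h1 : X →ₗ[ℂ] Y)) congr(($h2 : X →ₗ[ℂ] Y)) congr(($h3 : X →ₗ[ℂ] Y)) n
  simp only [toLinearMap_pow, toLinearMap_sub, toLinearMap_one]
  exact ⟨exists_congr key, fun _ ↦ congrArg sInf (Set.ext key)⟩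
end

section
/- Let A : X → Y and B, C : Y → X satisfy A(BA)² = ABACA = ACABA = (AC)²A. Then AC − I has finite descent if and only if BA − I has finite descent, and in that case their descents are equal. -/
/-!
If `S F = F T` and `S` left-divides `F G - 1`, then `S^n y ≡ S^n F G y = F T^n G y` modulo
`range S^(n+1)`, so descent of `T` at `n` gives descent of `S` at `n`. For `S = AC - 1` and
`T = BA - 1` the hypotheses make `ABABA = ABACA = ACABA = ACACA`, and then `F = ABA`, `G = BACAC`
intertwine in both directions with `FG = (AC)^4` and `GF = (BA)^4`.
-/

open Polynomial ContinuousLinearMap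

variable {X Y : Type*} [NormedAddCommGroup X] [NormedSpace ℂ X] [CompleteSpace X]
  [NormedAddCommGroup Y] [NormedSpace ℂ Y] [CompleteSpace Y]

namespace LinearMap

variable {R M N : Type*} [Ring R] [AddCommGroup M] [Module R M] [AddCommGroup N] [Module R N]

theorem range_pow_eq_range_pow_succ_of_semiconj {S : Module.End R M} {T : Module.End R N}
    {F : N →ₗ[R] M} {G : M →ₗ[R] N} (hF : S ∘ₗ F = F ∘ₗ T) (hFG : S ∣ F ∘ₗ G - 1) {n : ℕ}
    (hT : range (T ^ n) = range (T ^ (n + 1))) : range (S ^ n) = range (S ^ (n + 1)) := by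
  refine le_antisymm ?_ ((iterateRange S).monotone n.le_succ)
  rintro _ ⟨y, rfl⟩
  obtain ⟨q, hq⟩ := hFG
  have hsemi (k : ℕ) (x : N) : (S ^ k) (F x) = F ((T ^ k) x) :=
    LinearMap.congr_fun (Module.End.commute_pow_left_of_commute hF k) x
  obtain ⟨x, hx⟩ : (T ^ n) (G y) ∈ range (T ^ (n + 1)) := hT ▸ mem_range_self _ _
  have hy : y = F (G y) - S (q y) := by
    have := LinearMap.congr_fun hq y
    simp only [sub_apply, comp_apply, Module.End.one_apply, Module.End.mul_apply] at this
    rw [← this]; abel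
  refine ⟨F x - q y, ?_⟩
  conv_rhs => rw [hy]
  rw [map_sub, map_sub, hsemi n, ← hx, ← hsemi (n + 1)]
  simp only [pow_succ, Module.End.mul_apply]

theorem range_pow_sub_one_eq_iff_of_semiconj {U : Module.End R M} {V : Module.End R N}
    {F : N →ₗ[R] M} {G : M →ₗ[R] N} (hF : U ∘ₗ F = F ∘ₗ V) (hG : V ∘ₗ G = G ∘ₗ U) {k m : ℕ}
    (hFG : F ∘ₗ G = U ^ k) (hGF : G ∘ₗ F = V ^ m) (n : ℕ) :
    range ((U - 1) ^ n) = range ((U - 1) ^ (n + 1)) ↔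
      range ((V - 1) ^ n) = range ((V - 1) ^ (n + 1)) := by
  have hF' : (U - 1) ∘ₗ F = F ∘ₗ (V - 1) := by
    rw [sub_comp, comp_sub, hF]; rfl
  have hG' : (V - 1) ∘ₗ G = G ∘ₗ (U - 1) := by
    rw [sub_comp, comp_sub, hG]; rfl
  exact ⟨range_pow_eq_range_pow_succ_of_semiconj hG' (hGF ▸ sub_one_dvd_pow_sub_one V m),
    range_pow_eq_range_pow_succ_of_semiconj hF' (hFG ▸ sub_one_dvd_pow_sub_one U k)⟩

theorem range_pow_comp_sub_one_eq_iff {a : N →ₗ[R] M} {b c : M →ₗ[R] N}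
    (h1 : a ∘ₗ b ∘ₗ a ∘ₗ b ∘ₗ a = a ∘ₗ b ∘ₗ a ∘ₗ c ∘ₗ a)
    (h2 : a ∘ₗ b ∘ₗ a ∘ₗ c ∘ₗ a = a ∘ₗ c ∘ₗ a ∘ₗ b ∘ₗ a)
    (h3 : a ∘ₗ c ∘ₗ a ∘ₗ b ∘ₗ a = a ∘ₗ c ∘ₗ a ∘ₗ c ∘ₗ a) (n : ℕ) :
    range ((a ∘ₗ c - 1) ^ n) = range ((a ∘ₗ c - 1) ^ (n + 1)) ↔
      range ((b ∘ₗ a - 1) ^ n) = range ((b ∘ₗ a - 1) ^ (n + 1)) := by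
  have e1 : ∀ x, a (b (a (b (a x)))) = a (b (a (c (a x)))) := LinearMap.congr_fun h1
  have e2 : ∀ x, a (b (a (c (a x)))) = a (c (a (b (a x)))) := LinearMap.congr_fun h2
  have e3 : ∀ x, a (c (a (b (a x)))) = a (c (a (c (a x)))) := LinearMap.congr_fun h3
  have e23 x := (e2 x).trans (e3 x)
  have e123 x := (e1 x).trans (e23 x)
  refine range_pow_sub_one_eq_iff_of_semiconj (F := a ∘ₗ b ∘ₗ a) (G := b ∘ₗ a ∘ₗ c ∘ₗ a ∘ₗ c)
    (k := 4) (m := 4) ?_ ?_ ?_ ?_ n <;> ext x <;>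
    simp only [comp_apply, pow_succ, pow_zero, Module.End.mul_apply, Module.End.one_apply]
  · exact ((e1 x).trans (e2 x)).symm
  · rw [e23]
  · rw [e123]
  · rw [← e123]

end LinearMap

theorem stmt9 (A : X →L[ℂ] Y) (B C : Y →L[ℂ] X)
    (h1 : A ∘L B ∘L A ∘L B ∘L A = A ∘L B ∘L A ∘L C ∘L A)
    (h2 : A ∘L B ∘L A ∘L C ∘L A = A ∘L C ∘L A ∘L B ∘L A)
    (h3 : A ∘L C ∘L A ∘L B ∘L A = A ∘L C ∘L A ∘L C ∘L A) :
    ((∃ n : ℕ, LinearMap.range (((A ∘L C - 1) ^ n : Y →L[ℂ] Y) : Y →ₗ[ℂ] Y) = LinearMap.range (((A ∘L C - 1) ^ (n + 1) : Y →L[ℂ] Y) : Y →ₗ[ℂ] Y)) ↔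
      (∃ n : ℕ, LinearMap.range (((B ∘L A - 1) ^ n : X →L[ℂ] X) : X →ₗ[ℂ] X) = LinearMap.range (((B ∘L A - 1) ^ (n + 1) : X →L[ℂ] X) : X →ₗ[ℂ] X))) ∧
    ((∃ n : ℕ, LinearMap.range (((A ∘L C - 1) ^ n : Y →L[ℂ] Y) : Y →ₗ[ℂ] Y) = LinearMap.range (((A ∘L C - 1) ^ (n + 1) : Y →L[ℂ] Y) : Y →ₗ[ℂ] Y)) →
      sInf {n : ℕ | LinearMap.range (((A ∘L C - 1) ^ n : Y →L[ℂ] Y) : Y →ₗ[ℂ] Y) = LinearMap.range (((A ∘L C - 1) ^ (n + 1) : Y →L[ℂ] Y) : Y →ₗ[ℂ] Y)} =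
        sInf {n : ℕ | LinearMap.range (((B ∘L A - 1) ^ n : X →L[ℂ] X) : X →ₗ[ℂ] X) = LinearMap.range (((B ∘L A - 1) ^ (n + 1) : X →L[ℂ] X) : X →ₗ[ℂ] X)}) := by
  have key := LinearMap.range_pow_comp_sub_one_eq_iff (congrArg toLinearMap h1)
    (congrArg toLinearMap h2) (congrArg toLinearMap h3)
  simp only [toLinearMap_pow, toLinearMap_sub, toLinearMap_one, toLinearMap_comp] at key ⊢
  exact ⟨exists_congr key, fun _ => congrArg sInf (Set.ext key)⟩
end

section
/- Let A : X → Y and B, C : Y → X satisfy A(BA)² = ABACA = ACABA = (AC)²A. For each n ∈ ℕ, the linear map Φ from (R(BA−I)+N((BA−I)^{n+1}))/(R(BA−I)+N((BA−I)^n)) to (R(AC−I)+N((AC−I)^{n+1}))/(R(AC−I)+N((AC−I)^n)) induced by x ↦ ACAx is well-defined and injective; consequently k_n(BA−I) ≤ k_n(AC−I). -/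
/-!
Write `T = BA - 1`, `S = AC - 1`, `F = ACA` and `G = BABAC`. The hypothesis gives `S F = F T`,
`T G = G S` and `G F = (BA)⁴`, so that `G F - 1` has range inside `R(T)`. Hence `F` maps
`R(T) + N(Tᵏ)` into `R(S) + N(Sᵏ)`, and conversely `F x ∈ R(S) + N(Sᵏ)` forces
`x ∈ G F x + R(T) ⊆ R(T) + N(Tᵏ)`. So `R(T) + N(Tᵏ)` is the full preimage of `R(S) + N(Sᵏ)`
under `F` for every `k`, which makes the map induced by `F` on the subquotients injective.
-/

open Polynomial ContinuousLinearMap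

universe u

variable {X Y : Type u} [NormedAddCommGroup X] [NormedSpace ℂ X] [CompleteSpace X]
  [NormedAddCommGroup Y] [NormedSpace ℂ Y] [CompleteSpace Y]

open Function

namespace Submodule

variable {R M N : Type*} [Ring R] [AddCommGroup M] [Module R M] [AddCommGroup N] [Module R N]
  {f : M →ₗ[R] N} {p₁ p₀ : Submodule R M} {q₁ q₀ : Submodule R N}

def subquotientMap (f : M →ₗ[R] N) (h₁ : p₁ ≤ q₁.comap f) (h₀ : p₀ ≤ q₀.comap f) :
    p₁ ⧸ p₀.comap p₁.subtype →ₗ[R] q₁ ⧸ q₀.comap q₁.subtype :=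
  mapQ _ _ (f.restrict h₁)
    (show p₀.comap p₁.subtype ≤ (q₀.comap q₁.subtype).comap (f.restrict h₁) from fun _ hx ↦ h₀ hx)

@[simp]
theorem subquotientMap_mk (h₁ : p₁ ≤ q₁.comap f) (h₀ : p₀ ≤ q₀.comap f) (x : p₁) :
    subquotientMap f h₁ h₀ (Quotient.mk x) = Quotient.mk ⟨f x, h₁ x.2⟩ :=
  rfl

theorem subquotientMap_injective (h₁ : p₁ ≤ q₁.comap f) (h₀ : p₀ ≤ q₀.comap f)
    (h : q₀.comap f ≤ p₀) : Injective (subquotientMap f h₁ h₀) := by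
  rw [← LinearMap.ker_eq_bot, subquotientMap, ker_mapQ, eq_bot_iff, map_le_iff_le_comap, comap_bot,
    ker_mkQ]
  exact fun x hx ↦ h hx

end Submodule

namespace LinearMap

variable {R M N : Type*} [Ring R] [AddCommGroup M] [Module R M] [AddCommGroup N] [Module R N]
  {T : Module.End R M} {S : Module.End R N} {f : M →ₗ[R] N} {g : N →ₗ[R] M}

theorem range_sup_ker_pow_le_comap (hf : S ∘ₗ f = f ∘ₗ T) (k : ℕ) :
    range T ⊔ ker (T ^ k) ≤ (range S ⊔ ker (S ^ k)).comap f := by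
  rw [← Submodule.map_le_iff_le_comap, Submodule.map_sup, ← range_comp, ← hf]
  refine sup_le_sup (range_comp_le_range _ _) ?_
  rintro _ ⟨x, hx, rfl⟩
  rw [mem_ker, ← comp_apply, Module.End.commute_pow_left_of_commute hf, comp_apply, mem_ker.1 hx,
    map_zero]

theorem comap_range_sup_ker_pow_le (hg : T ∘ₗ g = g ∘ₗ S) (hgf : range (g ∘ₗ f - 1) ≤ range T)
    (k : ℕ) : (range S ⊔ ker (S ^ k)).comap f ≤ range T ⊔ ker (T ^ k) := by
  intro x hx
  have hgfx : g (f x) ∈ range T ⊔ ker (T ^ k) := range_sup_ker_pow_le_comap hg k hx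
  have hsub : g (f x) - x ∈ range T ⊔ ker (T ^ k) := Submodule.mem_sup_left (hgf ⟨x, rfl⟩)
  simpa using Submodule.sub_mem _ hgfx hsub

theorem range_pow_sub_one_le (u : Module.End R M) (k : ℕ) : range (u ^ k - 1) ≤ range (u - 1) := by
  rw [← mul_geom_sum]
  exact range_comp_le_range _ _

end LinearMap

section

variable {R M N : Type*} [Ring R] [AddCommGroup M] [Module R M] [AddCommGroup N] [Module R N]
  {A : M →ₗ[R] N} {B C : N →ₗ[R] M}

open LinearMap

theorem sub_one_comp_ACA (h : A ∘ₗ C ∘ₗ A ∘ₗ B ∘ₗ A = A ∘ₗ C ∘ₗ A ∘ₗ C ∘ₗ A) :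
    (A ∘ₗ C - 1) ∘ₗ (A ∘ₗ C ∘ₗ A) = (A ∘ₗ C ∘ₗ A) ∘ₗ (B ∘ₗ A - 1) := by
  ext x
  simpa [sub_eq_sub_iff_sub_eq_sub] using (LinearMap.congr_fun h x).symm

theorem sub_one_comp_BABAC (h : A ∘ₗ B ∘ₗ A ∘ₗ B ∘ₗ A = A ∘ₗ B ∘ₗ A ∘ₗ C ∘ₗ A) :
    (B ∘ₗ A - 1) ∘ₗ (B ∘ₗ A ∘ₗ B ∘ₗ A ∘ₗ C) = (B ∘ₗ A ∘ₗ B ∘ₗ A ∘ₗ C) ∘ₗ (A ∘ₗ C - 1) := by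
  ext y
  simpa using congrArg B (LinearMap.congr_fun h (C y))

theorem range_BABAC_comp_ACA_sub_one_le (h₁ : A ∘ₗ B ∘ₗ A ∘ₗ B ∘ₗ A = A ∘ₗ B ∘ₗ A ∘ₗ C ∘ₗ A)
    (h₂ : A ∘ₗ B ∘ₗ A ∘ₗ C ∘ₗ A = A ∘ₗ C ∘ₗ A ∘ₗ B ∘ₗ A)
    (h₃ : A ∘ₗ C ∘ₗ A ∘ₗ B ∘ₗ A = A ∘ₗ C ∘ₗ A ∘ₗ C ∘ₗ A) :
    range ((B ∘ₗ A ∘ₗ B ∘ₗ A ∘ₗ C) ∘ₗ (A ∘ₗ C ∘ₗ A) - 1) ≤ range (B ∘ₗ A - 1) := by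
  have hpow : (B ∘ₗ A ∘ₗ B ∘ₗ A ∘ₗ C) ∘ₗ (A ∘ₗ C ∘ₗ A) = (B ∘ₗ A) ^ 4 := by
    ext x
    simpa [pow_succ] using
      congrArg (B ∘ₗ A ∘ₗ B) (LinearMap.congr_fun (h₁.trans (h₂.trans h₃)) x).symm
  rw [hpow]
  exact range_pow_sub_one_le _ 4

end

theorem stmt10 (A : X →L[ℂ] Y) (B C : Y →L[ℂ] X)
    (h1 : A ∘L B ∘L A ∘L B ∘L A = A ∘L B ∘L A ∘L C ∘L A)
    (h2 : A ∘L B ∘L A ∘L C ∘L A = A ∘L C ∘L A ∘L B ∘L A)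
    (h3 : A ∘L C ∘L A ∘L B ∘L A = A ∘L C ∘L A ∘L C ∘L A) (n : ℕ) :
    (∃ Φ : ((LinearMap.range ((B ∘L A - 1 : X →L[ℂ] X) : X →ₗ[ℂ] X) ⊔ LinearMap.ker (((B ∘L A - 1) ^ (n + 1) : X →L[ℂ] X) : X →ₗ[ℂ] X) :
            Submodule ℂ X) ⧸
          ((LinearMap.range ((B ∘L A - 1 : X →L[ℂ] X) : X →ₗ[ℂ] X) ⊔ LinearMap.ker (((B ∘L A - 1) ^ n : X →L[ℂ] X) : X →ₗ[ℂ] X) :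
            Submodule ℂ X)).comap
            ((LinearMap.range ((B ∘L A - 1 : X →L[ℂ] X) : X →ₗ[ℂ] X) ⊔ LinearMap.ker (((B ∘L A - 1) ^ (n + 1) : X →L[ℂ] X) : X →ₗ[ℂ] X) :
              Submodule ℂ X)).subtype) →ₗ[ℂ]
        ((LinearMap.range ((A ∘L C - 1 : Y →L[ℂ] Y) : Y →ₗ[ℂ] Y) ⊔ LinearMap.ker (((A ∘L C - 1) ^ (n + 1) : Y →L[ℂ] Y) : Y →ₗ[ℂ] Y) :
            Submodule ℂ Y) ⧸
          ((LinearMap.range ((A ∘L C - 1 : Y →L[ℂ] Y) : Y →ₗ[ℂ] Y) ⊔ LinearMap.ker (((A ∘L C - 1) ^ n : Y →L[ℂ] Y) : Y →ₗ[ℂ] Y) :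
            Submodule ℂ Y)).comap
            ((LinearMap.range ((A ∘L C - 1 : Y →L[ℂ] Y) : Y →ₗ[ℂ] Y) ⊔ LinearMap.ker (((A ∘L C - 1) ^ (n + 1) : Y →L[ℂ] Y) : Y →ₗ[ℂ] Y) :
              Submodule ℂ Y)).subtype),
      Function.Injective Φ ∧
      ∀ (x : (LinearMap.range ((B ∘L A - 1 : X →L[ℂ] X) : X →ₗ[ℂ] X) ⊔ LinearMap.ker (((B ∘L A - 1) ^ (n + 1) : X →L[ℂ] X) : X →ₗ[ℂ] X) :
            Submodule ℂ X))
        (hx : (A ∘L C ∘L A) (x : X) ∈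
          LinearMap.range ((A ∘L C - 1 : Y →L[ℂ] Y) : Y →ₗ[ℂ] Y) ⊔ LinearMap.ker (((A ∘L C - 1) ^ (n + 1) : Y →L[ℂ] Y) : Y →ₗ[ℂ] Y)),
        Φ (Submodule.Quotient.mk x) =
          Submodule.Quotient.mk ⟨(A ∘L C ∘L A) (x : X), hx⟩) ∧
    Module.rank ℂ ((LinearMap.range ((B ∘L A - 1 : X →L[ℂ] X) : X →ₗ[ℂ] X) ⊔ LinearMap.ker (((B ∘L A - 1) ^ (n + 1) : X →L[ℂ] X) : X →ₗ[ℂ] X) :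
            Submodule ℂ X) ⧸
          ((LinearMap.range ((B ∘L A - 1 : X →L[ℂ] X) : X →ₗ[ℂ] X) ⊔ LinearMap.ker (((B ∘L A - 1) ^ n : X →L[ℂ] X) : X →ₗ[ℂ] X) :
            Submodule ℂ X)).comap
            ((LinearMap.range ((B ∘L A - 1 : X →L[ℂ] X) : X →ₗ[ℂ] X) ⊔ LinearMap.ker (((B ∘L A - 1) ^ (n + 1) : X →L[ℂ] X) : X →ₗ[ℂ] X) :
              Submodule ℂ X)).subtype) ≤
      Module.rank ℂ ((LinearMap.range ((A ∘L C - 1 : Y →L[ℂ] Y) : Y →ₗ[ℂ] Y) ⊔ LinearMap.ker (((A ∘L C - 1) ^ (n + 1) : Y →L[ℂ] Y) : Y →ₗ[ℂ] Y) :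
            Submodule ℂ Y) ⧸
          ((LinearMap.range ((A ∘L C - 1 : Y →L[ℂ] Y) : Y →ₗ[ℂ] Y) ⊔ LinearMap.ker (((A ∘L C - 1) ^ n : Y →L[ℂ] Y) : Y →ₗ[ℂ] Y) :
            Submodule ℂ Y)).comap
            ((LinearMap.range ((A ∘L C - 1 : Y →L[ℂ] Y) : Y →ₗ[ℂ] Y) ⊔ LinearMap.ker (((A ∘L C - 1) ^ (n + 1) : Y →L[ℂ] Y) : Y →ₗ[ℂ] Y) :
              Submodule ℂ Y)).subtype) := by
  rw [← coe_injective.eq_iff] at h1 h2 h3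
  simp only [toLinearMap_comp] at h1 h2 h3
  have hcomap (k : ℕ) :
      (LinearMap.range ((A ∘L C - 1 : Y →L[ℂ] Y) : Y →ₗ[ℂ] Y) ⊔
          LinearMap.ker (((A ∘L C - 1) ^ k : Y →L[ℂ] Y) : Y →ₗ[ℂ] Y)).comap (A ∘L C ∘L A : X →ₗ[ℂ] Y) =
        LinearMap.range ((B ∘L A - 1 : X →L[ℂ] X) : X →ₗ[ℂ] X) ⊔
          LinearMap.ker (((B ∘L A - 1) ^ k : X →L[ℂ] X) : X →ₗ[ℂ] X) := by
    simp only [toLinearMap_pow, toLinearMap_sub, toLinearMap_comp, toLinearMap_one]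
    exact le_antisymm
      (LinearMap.comap_range_sup_ker_pow_le (sub_one_comp_BABAC h1)
        (range_BABAC_comp_ACA_sub_one_le h1 h2 h3) k)
      (LinearMap.range_sup_ker_pow_le_comap (sub_one_comp_ACA h3) k)
  have hinj := Submodule.subquotientMap_injective (hcomap (n + 1)).ge (hcomap n).ge (hcomap n).le
  exact ⟨⟨_, hinj, fun _ _ ↦ Submodule.subquotientMap_mk _ _ _⟩, LinearMap.rank_le_of_injective _ hinj⟩
end

section
/- Let A : X → Y and B, C : Y → X satisfy A(BA)² = ABACA = ACABA = (AC)²A. Then for all n ∈ ℕ, k_n(AC−I) = k_n(BA−I), where k_n(T) = dim (R(T)+N(T^{n+1}))/(R(T)+N(T^n)). -/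
/-!
If `U : M → N` and `D : N → M` intertwine `T` with `T'` and `DU - 1`, `UD - 1` take values in
the ranges of `T`, `T'`, then `U` and `D` induce mutually inverse maps between the quotients
`(R(T) + N(T^{n+1})) / (R(T) + N(T^n))` and the corresponding ones for `T'`.
Under the hypothesis, `U = A(BA)²` and `D = (BA)²C` intertwine `BA` with `AC`, and
`DU = (BA)⁵`, `UD = (AC)⁵`; since `Q⁵ - 1 = (Q - 1)(1 + Q + ⋯ + Q⁴)`, this applies to
`T = BA - 1` and `T' = AC - 1`.
-/

open Polynomial ContinuousLinearMap

universe u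

variable {X Y : Type u} [NormedAddCommGroup X] [NormedSpace ℂ X] [CompleteSpace X]
  [NormedAddCommGroup Y] [NormedSpace ℂ Y] [CompleteSpace Y]

namespace Submodule

variable {R : Type*} {M N : Type*} [Ring R] [AddCommGroup M] [Module R M]
  [AddCommGroup N] [Module R N]

theorem comap_subtype_le_comap_restrict {p p' : Submodule R M} {q q' : Submodule R N}
    {f : M →ₗ[R] N} (hf : p ≤ q.comap f) (hf' : p' ≤ q'.comap f) :
    p.comap p'.subtype ≤ (q.comap q'.subtype).comap (f.restrict hf') :=
  fun _ hx => hf hx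

def subquotientEquivOfInverse {p p' : Submodule R M} {q q' : Submodule R N}
    (f : M →ₗ[R] N) (g : N →ₗ[R] M)
    (hf : p ≤ q.comap f) (hf' : p' ≤ q'.comap f) (hg : q ≤ p.comap g) (hg' : q' ≤ p'.comap g)
    (hgf : ∀ x ∈ p', g (f x) - x ∈ p) (hfg : ∀ y ∈ q', f (g y) - y ∈ q) :
    (p' ⧸ p.comap p'.subtype) ≃ₗ[R] (q' ⧸ q.comap q'.subtype) :=
  LinearEquiv.ofLinearMap
    ((p.comap p'.subtype).mapQ (q.comap q'.subtype) (f.restrict hf')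
      (comap_subtype_le_comap_restrict hf hf'))
    ((q.comap q'.subtype).mapQ (p.comap p'.subtype) (g.restrict hg')
      (comap_subtype_le_comap_restrict hg hg'))
    (by
      ext y
      simp only [LinearMap.comp_apply, mkQ_apply, LinearMap.id_apply]
      rw [mapQ_apply, mapQ_apply, Submodule.Quotient.eq]
      exact hfg y y.2)
    (by
      ext x
      simp only [LinearMap.comp_apply, mkQ_apply, LinearMap.id_apply]
      rw [mapQ_apply, mapQ_apply, Submodule.Quotient.eq]
      exact hgf x x.2)

end Submodule

namespace Module.End

variable {R : Type*} {M N : Type u} [Ring R] [AddCommGroup M] [Module R M]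
  [AddCommGroup N] [Module R N]

def rangeSupKer (T : Module.End R M) (n : ℕ) : Submodule R M :=
  LinearMap.range T ⊔ LinearMap.ker (T ^ n)

/-- Its rank is the paper's `k_n(T)`. -/
abbrev rangeSupKerQuotient (T : Module.End R M) (n : ℕ) : Type u :=
  rangeSupKer T (n + 1) ⧸ (rangeSupKer T n).comap (rangeSupKer T (n + 1)).subtype

theorem rangeSupKer_le_comap {T : Module.End R M} {T' : Module.End R N} {U : M →ₗ[R] N}
    (hU : U ∘ₗ T = T' ∘ₗ U) (n : ℕ) : rangeSupKer T n ≤ (rangeSupKer T' n).comap U := by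
  refine sup_le ?_ ?_
  · rw [← Submodule.map_le_iff_le_comap, ← LinearMap.range_comp, hU]
    exact (LinearMap.range_comp_le_range U T').trans le_sup_left
  · refine le_trans ?_ (Submodule.comap_mono le_sup_right)
    rw [← LinearMap.ker_comp, commute_pow_left_of_commute hU.symm]
    exact LinearMap.ker_le_ker_comp _ _

theorem comp_sub_one_eq {Q : Module.End R M} {P : Module.End R N} {U : M →ₗ[R] N}
    (h : U ∘ₗ Q = P ∘ₗ U) : U ∘ₗ (Q - 1) = (P - 1) ∘ₗ U := by
  rw [LinearMap.comp_sub, LinearMap.sub_comp, h, one_eq_id, one_eq_id, LinearMap.comp_id,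
    LinearMap.id_comp]

theorem range_pow_sub_one_le (Q : Module.End R M) (k : ℕ) :
    LinearMap.range (Q ^ k - 1) ≤ LinearMap.range (Q - 1) := by
  rw [← mul_geom_sum, mul_eq_comp]
  exact LinearMap.range_comp_le_range _ _

theorem rank_rangeSupKerQuotient_eq_of_comp_eq {T : Module.End R M} {T' : Module.End R N}
    {U : M →ₗ[R] N} {D : N →ₗ[R] M} (hU : U ∘ₗ T = T' ∘ₗ U) (hD : D ∘ₗ T' = T ∘ₗ D)
    (hDU : LinearMap.range (D ∘ₗ U - 1) ≤ LinearMap.range T)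
    (hUD : LinearMap.range (U ∘ₗ D - 1) ≤ LinearMap.range T') (n : ℕ) :
    Module.rank R (rangeSupKerQuotient T n) = Module.rank R (rangeSupKerQuotient T' n) :=
  (Submodule.subquotientEquivOfInverse U D (rangeSupKer_le_comap hU n)
    (rangeSupKer_le_comap hU (n + 1)) (rangeSupKer_le_comap hD n)
    (rangeSupKer_le_comap hD (n + 1))
    (fun x _ => Submodule.mem_sup_left (hDU ⟨x, rfl⟩))
    (fun y _ => Submodule.mem_sup_left (hUD ⟨y, rfl⟩))).rank_eq

theorem rank_rangeSupKerQuotient_comp_sub_one_eq (a : M →ₗ[R] N) (b c : N →ₗ[R] M)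
    (h1 : a ∘ₗ b ∘ₗ a ∘ₗ b ∘ₗ a = a ∘ₗ b ∘ₗ a ∘ₗ c ∘ₗ a)
    (h2 : a ∘ₗ b ∘ₗ a ∘ₗ c ∘ₗ a = a ∘ₗ c ∘ₗ a ∘ₗ b ∘ₗ a)
    (h3 : a ∘ₗ c ∘ₗ a ∘ₗ b ∘ₗ a = a ∘ₗ c ∘ₗ a ∘ₗ c ∘ₗ a) (n : ℕ) :
    Module.rank R (rangeSupKerQuotient (a ∘ₗ c - 1) n) =
      Module.rank R (rangeSupKerQuotient (b ∘ₗ a - 1) n) := by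
  have e1 (x : M) : a (b (a (b (a x)))) = a (b (a (c (a x)))) := LinearMap.congr_fun h1 x
  have e2 (x : M) : a (b (a (c (a x)))) = a (c (a (b (a x)))) := LinearMap.congr_fun h2 x
  have e3 (x : M) : a (c (a (b (a x)))) = a (c (a (c (a x)))) := LinearMap.congr_fun h3 x
  have hUQ : (a ∘ₗ b ∘ₗ a ∘ₗ b ∘ₗ a) ∘ₗ (b ∘ₗ a) = (a ∘ₗ c) ∘ₗ (a ∘ₗ b ∘ₗ a ∘ₗ b ∘ₗ a) := by
    ext x
    simp only [LinearMap.comp_apply]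
    rw [e1, e2]
  have hDP : (b ∘ₗ a ∘ₗ b ∘ₗ a ∘ₗ c) ∘ₗ (a ∘ₗ c) = (b ∘ₗ a) ∘ₗ (b ∘ₗ a ∘ₗ b ∘ₗ a ∘ₗ c) := by
    ext y
    simp only [LinearMap.comp_apply]
    rw [e1]
  have hDU : (b ∘ₗ a ∘ₗ b ∘ₗ a ∘ₗ c) ∘ₗ (a ∘ₗ b ∘ₗ a ∘ₗ b ∘ₗ a) = (b ∘ₗ a) ^ 5 := by
    ext x
    simp only [LinearMap.comp_apply, pow_succ, mul_apply, pow_zero, one_apply]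
    rw [← e1 (b (a (b (a x))))]
  have hUD : (a ∘ₗ b ∘ₗ a ∘ₗ b ∘ₗ a) ∘ₗ (b ∘ₗ a ∘ₗ b ∘ₗ a ∘ₗ c) = (a ∘ₗ c) ^ 5 := by
    ext y
    simp only [LinearMap.comp_apply, pow_succ, mul_apply, pow_zero, one_apply]
    rw [e1, e2, e3, e1, e2, e3]
  refine rank_rangeSupKerQuotient_eq_of_comp_eq (comp_sub_one_eq hDP)
    (comp_sub_one_eq hUQ) ?_ ?_ n
  · rw [hUD]; exact range_pow_sub_one_le _ 5
  · rw [hDU]; exact range_pow_sub_one_le _ 5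

end Module.End

theorem stmt11 (A : X →L[ℂ] Y) (B C : Y →L[ℂ] X)
    (h1 : A ∘L B ∘L A ∘L B ∘L A = A ∘L B ∘L A ∘L C ∘L A)
    (h2 : A ∘L B ∘L A ∘L C ∘L A = A ∘L C ∘L A ∘L B ∘L A)
    (h3 : A ∘L C ∘L A ∘L B ∘L A = A ∘L C ∘L A ∘L C ∘L A) (n : ℕ) :
    Module.rank ℂ ((LinearMap.range ((A ∘L C - 1 : Y →L[ℂ] Y) : Y →ₗ[ℂ] Y) ⊔ LinearMap.ker (((A ∘L C - 1) ^ (n + 1) : Y →L[ℂ] Y) : Y →ₗ[ℂ] Y) :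
            Submodule ℂ Y) ⧸
          ((LinearMap.range ((A ∘L C - 1 : Y →L[ℂ] Y) : Y →ₗ[ℂ] Y) ⊔ LinearMap.ker (((A ∘L C - 1) ^ n : Y →L[ℂ] Y) : Y →ₗ[ℂ] Y) :
            Submodule ℂ Y)).comap
            ((LinearMap.range ((A ∘L C - 1 : Y →L[ℂ] Y) : Y →ₗ[ℂ] Y) ⊔ LinearMap.ker (((A ∘L C - 1) ^ (n + 1) : Y →L[ℂ] Y) : Y →ₗ[ℂ] Y) :
              Submodule ℂ Y)).subtype) =
      Module.rank ℂ ((LinearMap.range ((B ∘L A - 1 : X →L[ℂ] X) : X →ₗ[ℂ] X) ⊔ LinearMap.ker (((B ∘L A - 1) ^ (n + 1) : X →L[ℂ] X) : X →ₗ[ℂ] X) :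
            Submodule ℂ X) ⧸
          ((LinearMap.range ((B ∘L A - 1 : X →L[ℂ] X) : X →ₗ[ℂ] X) ⊔ LinearMap.ker (((B ∘L A - 1) ^ n : X →L[ℂ] X) : X →ₗ[ℂ] X) :
            Submodule ℂ X)).comap
            ((LinearMap.range ((B ∘L A - 1 : X →L[ℂ] X) : X →ₗ[ℂ] X) ⊔ LinearMap.ker (((B ∘L A - 1) ^ (n + 1) : X →L[ℂ] X) : X →ₗ[ℂ] X) :
              Submodule ℂ X)).subtype) := by
  rw [toLinearMap_pow, toLinearMap_pow,
    toLinearMap_pow, toLinearMap_pow]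
  exact Module.End.rank_rangeSupKerQuotient_comp_sub_one_eq (A : X →ₗ[ℂ] Y) B C
    (congrArg toLinearMap h1) (congrArg toLinearMap h2) (congrArg toLinearMap h3) n
end

section
/- Let A : X → Y and B, C : Y → X be bounded linear operators between Banach spaces satisfying A(BA)² = ABACA = ACABA = (AC)²A. Then for all n ∈ ℕ, the subspace R(AC−I) + N((AC−I)^n) is closed in Y if and only if R(BA−I) + N((BA−I)^n) is closed in X. In particular, R(AC−I) is closed if and only if R(BA−I) is closed. -/
/-!
Put `P = BA` and `Q = AC`. The operators `U = BABAC : Y → X` and `V = ABA : X → Y` intertwine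
`Q` with `P` and `P` with `Q`, and the hypothesis collapses every alternating word of length five
to `ACACA`, so `VU = Q⁴` and `UV = P⁴`. Since `Q⁴ - 1 = (Q - 1)(Q³ + Q² + Q + 1)`, an intertwining
map `U` with such a "partial inverse" `V` identifies `R(Q - 1) + N((Q - 1)ⁿ)` with the preimage
under `U` of `R(P - 1) + N((P - 1)ⁿ)`. Preimages of closed sets under continuous maps are closed,
and the roles of the two sides are symmetric.
-/

open Polynomial ContinuousLinearMap

namespace LinearMap

variable {R M N : Type*} [Ring R] [AddCommGroup M] [Module R M] [AddCommGroup N] [Module R N]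

theorem pow_apply_sub_self_mem_range_sub_one (f : Module.End R M) (n : ℕ) (x : M) :
    (f ^ n) x - x ∈ range (f - 1) :=
  ⟨(∑ i ∈ Finset.range n, f ^ i) x, by rw [← Module.End.mul_apply, mul_geom_sum, sub_apply,
    Module.End.one_apply]⟩

theorem map_range_sup_ker_pow_le {σ : Module.End R M} {τ : Module.End R N} {U : M →ₗ[R] N}
    (hU : U ∘ₗ σ = τ ∘ₗ U) (n : ℕ) :
    (range σ ⊔ ker (σ ^ n)).map U ≤ range τ ⊔ ker (τ ^ n) := by
  rw [Submodule.map_sup, ← range_comp, hU]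
  refine sup_le_sup (range_comp_le_range U τ) ?_
  rw [Submodule.map_le_iff_le_comap, ← ker_comp, Module.End.commute_pow_left_of_commute hU.symm n]
  exact ker_le_ker_comp _ _

theorem comap_range_sup_ker_pow {σ : Module.End R M} {τ : Module.End R N} {U : M →ₗ[R] N}
    {V : N →ₗ[R] M} (hU : U ∘ₗ σ = τ ∘ₗ U) (hV : V ∘ₗ τ = σ ∘ₗ V)
    (hVU : ∀ x, V (U x) - x ∈ range σ) (n : ℕ) :
    (range τ ⊔ ker (τ ^ n)).comap U = range σ ⊔ ker (σ ^ n) := by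
  refine le_antisymm (fun x hx ↦ ?_) (Submodule.map_le_iff_le_comap.mp
    (map_range_sup_ker_pow_le hU n))
  have hVUx : V (U x) ∈ range σ ⊔ ker (σ ^ n) := map_range_sup_ker_pow_le hV n ⟨U x, hx, rfl⟩
  simpa only [sub_sub_cancel] using sub_mem hVUx (Submodule.mem_sup_left (hVU x))

end LinearMap

namespace ContinuousLinearMap

variable {R E F : Type*} [Ring R]
  [TopologicalSpace E] [AddCommGroup E] [Module R E] [IsTopologicalAddGroup E]
  [TopologicalSpace F] [AddCommGroup F] [Module R F] [IsTopologicalAddGroup F]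

theorem comap_range_sup_ker_pow_sub_one {P : E →L[R] E} {Q : F →L[R] F} {U : F →L[R] E}
    {V : E →L[R] F} (hU : U ∘L Q = P ∘L U) (hV : V ∘L P = Q ∘L V) {k : ℕ} (hVU : V ∘L U = Q ^ k)
    (n : ℕ) :
    (LinearMap.range ((P - 1 : E →L[R] E) : E →ₗ[R] E) ⊔
        LinearMap.ker (((P - 1) ^ n : E →L[R] E) : E →ₗ[R] E)).comap (U : F →ₗ[R] E) =
      LinearMap.range ((Q - 1 : F →L[R] F) : F →ₗ[R] F) ⊔
        LinearMap.ker (((Q - 1) ^ n : F →L[R] F) : F →ₗ[R] F) := by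
  rw [toLinearMap_pow, toLinearMap_pow]
  refine LinearMap.comap_range_sup_ker_pow (V := (V : E →ₗ[R] F)) ?_ ?_ (fun y ↦ ?_) n
  · exact LinearMap.ext fun x ↦ by simpa using DFunLike.congr_fun hU x
  · exact LinearMap.ext fun x ↦ by simpa using DFunLike.congr_fun hV x
  · simpa [← toLinearMap_pow, ← hVU] using
      LinearMap.pow_apply_sub_self_mem_range_sub_one (Q : F →ₗ[R] F) k y

theorem isClosed_range_sup_ker_pow_sub_one_iff {P : E →L[R] E} {Q : F →L[R] F} {U : F →L[R] E}
    {V : E →L[R] F} (hU : U ∘L Q = P ∘L U) (hV : V ∘L P = Q ∘L V) {k l : ℕ}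
    (hUV : U ∘L V = P ^ k) (hVU : V ∘L U = Q ^ l) (n : ℕ) :
    IsClosed ((LinearMap.range ((Q - 1 : F →L[R] F) : F →ₗ[R] F) ⊔
        LinearMap.ker (((Q - 1) ^ n : F →L[R] F) : F →ₗ[R] F) : Submodule R F) : Set F) ↔
      IsClosed ((LinearMap.range ((P - 1 : E →L[R] E) : E →ₗ[R] E) ⊔
        LinearMap.ker (((P - 1) ^ n : E →L[R] E) : E →ₗ[R] E) : Submodule R E) : Set E) := by
  constructor
  · rw [← comap_range_sup_ker_pow_sub_one hV hU hUV]
    exact fun h ↦ h.preimage V.continuous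
  · rw [← comap_range_sup_ker_pow_sub_one hU hV hVU]
    exact fun h ↦ h.preimage U.continuous

end ContinuousLinearMap

variable {X Y : Type*} [NormedAddCommGroup X] [NormedSpace ℂ X] [CompleteSpace X]
  [NormedAddCommGroup Y] [NormedSpace ℂ Y] [CompleteSpace Y]
theorem stmt12 (A : X →L[ℂ] Y) (B C : Y →L[ℂ] X)
    (h1 : A ∘L B ∘L A ∘L B ∘L A = A ∘L B ∘L A ∘L C ∘L A)
    (h2 : A ∘L B ∘L A ∘L C ∘L A = A ∘L C ∘L A ∘L B ∘L A)
    (h3 : A ∘L C ∘L A ∘L B ∘L A = A ∘L C ∘L A ∘L C ∘L A) :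
    (∀ n : ℕ,
      IsClosed ((LinearMap.range ((A ∘L C - 1 : Y →L[ℂ] Y) : Y →ₗ[ℂ] Y) ⊔
          LinearMap.ker (((A ∘L C - 1) ^ n : Y →L[ℂ] Y) : Y →ₗ[ℂ] Y) :
          Submodule ℂ Y) : Set Y) ↔
        IsClosed ((LinearMap.range ((B ∘L A - 1 : X →L[ℂ] X) : X →ₗ[ℂ] X) ⊔
          LinearMap.ker (((B ∘L A - 1) ^ n : X →L[ℂ] X) : X →ₗ[ℂ] X) :
          Submodule ℂ X) : Set X)) ∧
    (IsClosed ((LinearMap.range ((A ∘L C - 1 : Y →L[ℂ] Y) : Y →ₗ[ℂ] Y) : Submodule ℂ Y) : Set Y) ↔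
      IsClosed ((LinearMap.range ((B ∘L A - 1 : X →L[ℂ] X) : X →ₗ[ℂ] X) : Submodule ℂ X) : Set X)) := by
  have h1' (x : X) : A (B (A (B (A x)))) = A (B (A (C (A x)))) := DFunLike.congr_fun h1 x
  have h2' (x : X) : A (B (A (C (A x)))) = A (C (A (B (A x)))) := DFunLike.congr_fun h2 x
  have h3' (x : X) : A (C (A (B (A x)))) = A (C (A (C (A x)))) := DFunLike.congr_fun h3 x
  have hU : (B ∘L A ∘L B ∘L A ∘L C) ∘L (A ∘L C) = (B ∘L A) ∘L (B ∘L A ∘L B ∘L A ∘L C) := by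
    ext y; simp only [comp_apply, h1', h2', h3']
  have hV : (A ∘L B ∘L A) ∘L (B ∘L A) = (A ∘L C) ∘L (A ∘L B ∘L A) := by
    ext x; simp only [comp_apply, h1', h2', h3']
  have hUV : (B ∘L A ∘L B ∘L A ∘L C) ∘L (A ∘L B ∘L A) = (B ∘L A) ^ 4 := by
    ext x; simp only [comp_apply, pow_succ, pow_zero, one_mul, mul_apply_eq_comp, h1', h2', h3']
  have hVU : (A ∘L B ∘L A) ∘L (B ∘L A ∘L B ∘L A ∘L C) = (A ∘L C) ^ 4 := by
    ext y; simp only [comp_apply, pow_succ, pow_zero, one_mul, mul_apply_eq_comp, h1', h2', h3']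
  have hclosed := isClosed_range_sup_ker_pow_sub_one_iff hU hV hUV hVU
  refine ⟨hclosed, ?_⟩
  simpa only [pow_zero, toLinearMap_one, Module.End.one_eq_id, LinearMap.ker_id, sup_bot_eq] using
    hclosed 0
end

section
/- Let A : X → Y and B, C : Y → X satisfy A(BA)² = ABACA = ACABA = (AC)²A. For each n ≥ 1, define B_n = Σ_{k=1}^n (−1)^{k−1} C(n,k) B(AB)^{k−1} and C_n = Σ_{k=1}^n (−1)^{k−1} C(n,k) (CA)^{k−1}C. Then (I − AC)^n = I − AC_n, (I − BA)^n = I − B_nA, and A(B_nA)² = AB_nAC_nA = AC_nAB_nA = (AC_n)²A. -/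
/-!
Write `u = A ∘ B` and `v = A ∘ C`. The hypothesis says `s t A = u² A` for all `s, t ∈ {u, v}`.
Because `(AB)ᵐ A = A (BA)ᵐ`, an identity `f A = g A` survives right composition with `(AB)ᵐ A`,
so the hypothesis propagates to `xʲ yᵏ A = uʲ⁺ᵏ A` for all `j, k ≥ 1` and `x, y ∈ {u, v}`.
With `p(z) = 1 - (1 - z)ⁿ = ∑ₖ₌₁ⁿ (-1)ᵏ⁻¹ C(n,k) zᵏ`, which has no constant term, one has
`A Bₙ = p(u)`, `A Cₙ = p(v)`, `Bₙ A = p(BA)`, and hence `p(x) p(y) A = p(u)² A` for `x, y ∈ {u, v}`.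
-/

open Polynomial ContinuousLinearMap

variable {X Y : Type*} [NormedAddCommGroup X] [NormedSpace ℂ X] [CompleteSpace X]
  [NormedAddCommGroup Y] [NormedSpace ℂ Y] [CompleteSpace Y]

open Finset

theorem one_sub_pow_eq_one_sub_sum {𝕜 R : Type*} [CommRing 𝕜] [Ring R] [Algebra 𝕜 R]
    (z : R) (n : ℕ) :
    (1 - z) ^ n = 1 - ∑ k ∈ Icc 1 n, ((-1 : 𝕜) ^ (k - 1) * n.choose k) • z ^ k := by
  have hbinom : (1 - z) ^ n = ∑ k ∈ Icc 0 n, ((-1 : 𝕜) ^ k * n.choose k) • z ^ k := by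
    rw [sub_eq_neg_add, (Commute.one_right (-z)).add_pow, Nat.range_succ_eq_Icc_zero]
    refine sum_congr rfl fun k _ => ?_
    rw [one_pow, mul_one, neg_pow, Algebra.smul_def]
    simp only [map_mul, map_pow, map_neg, map_one, map_natCast]
    rw [mul_assoc, mul_assoc, Nat.cast_comm]
  rw [hbinom, Icc_eq_cons_Ioc n.zero_le, sum_cons, ← Icc_add_one_left_eq_Ioc, zero_add,
    sub_eq_add_neg, ← sum_neg_distrib]
  simp only [pow_zero, Nat.choose_zero_right, Nat.cast_one, mul_one, one_smul]
  congr 1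
  refine sum_congr rfl fun k hk => ?_
  obtain ⟨j, rfl⟩ := Nat.exists_eq_add_of_le' (mem_Icc.mp hk).1
  rw [Nat.add_sub_cancel, pow_succ, ← neg_smul]
  ring_nf

namespace ContinuousLinearMap

section Semiring

variable {R M N : Type*} [Semiring R] [TopologicalSpace M] [AddCommMonoid M] [Module R M]
  [TopologicalSpace N] [AddCommMonoid N] [Module R N]

theorem pow_comp_eq_comp_pow {f : M →L[R] N} {g : M →L[R] M} {g' : N →L[R] N}
    (h : g' ∘L f = f ∘L g) (k : ℕ) : (g' ^ k) ∘L f = f ∘L g ^ k := by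
  induction k with
  | zero => rfl
  | succ k ih =>
    rw [pow_succ, pow_succ, mul_def, mul_def, ContinuousLinearMap.comp_assoc, h,
      ← ContinuousLinearMap.comp_assoc, ih, ContinuousLinearMap.comp_assoc]

theorem pow_comp_comp_self (A : M →L[R] N) (B : N →L[R] M) (k : ℕ) :
    ((A ∘L B) ^ k) ∘L A = A ∘L (B ∘L A) ^ k :=
  pow_comp_eq_comp_pow (f := A) (g := B ∘L A) (g' := A ∘L B) rfl k

theorem comp_pow_comp_eq_of_comp_eq {A : M →L[R] N} {f g : N →L[R] N} (h : f ∘L A = g ∘L A)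
    (D : N →L[R] M) (m : ℕ) : f ∘L ((A ∘L D) ^ m) ∘L A = g ∘L ((A ∘L D) ^ m) ∘L A := by
  rw [pow_comp_comp_self, ← ContinuousLinearMap.comp_assoc, h, ContinuousLinearMap.comp_assoc]

theorem pow_comp_pow_comp_of_comp_comp {A : M →L[R] N} {B : N →L[R] M} {x : N →L[R] N}
    (hx : x ∘L (A ∘L B) ∘L A = (A ∘L B) ∘L (A ∘L B) ∘L A) (j m : ℕ) :
    (x ^ j) ∘L ((A ∘L B) ^ (m + 1)) ∘L A = ((A ∘L B) ^ (j + m + 1)) ∘L A := by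
  set u := A ∘L B
  induction j with
  | zero => rw [pow_zero, zero_add, one_def, id_comp]
  | succ j ih =>
    calc (x ^ (j + 1)) ∘L (u ^ (m + 1)) ∘L A = x ∘L (x ^ j) ∘L (u ^ (m + 1)) ∘L A := by
          rw [pow_succ', mul_def, ContinuousLinearMap.comp_assoc]
      _ = x ∘L u ∘L (u ^ (j + m)) ∘L A := by
          rw [ih, pow_succ', mul_def, ContinuousLinearMap.comp_assoc]
      _ = u ∘L u ∘L (u ^ (j + m)) ∘L A :=
          comp_pow_comp_eq_of_comp_eq (f := x ∘L u) (g := u ∘L u) hx B (j + m)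
      _ = (u ^ (j + 1 + m + 1)) ∘L A := by
          rw [show j + 1 + m + 1 = j + m + 1 + 1 by omega, pow_succ', pow_succ', mul_def, mul_def]
          rfl

theorem pow_comp_pow_comp_of_forall_mem {A : M →L[R] N} {B : N →L[R] M}
    {S : Set (N →L[R] N)} (hu : A ∘L B ∈ S)
    (hS : ∀ s ∈ S, ∀ t ∈ S, s ∘L t ∘L A = (A ∘L B) ∘L (A ∘L B) ∘L A)
    {x y : N →L[R] N} (hx : x ∈ S) (hy : y ∈ S) (j k : ℕ) :
    (x ^ (j + 1)) ∘L (y ^ (k + 1)) ∘L A = ((A ∘L B) ^ (j + k + 2)) ∘L A := by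
  set u := A ∘L B
  have hpow : ∀ z ∈ S, ∀ s ∈ S, ∀ t ∈ S, ∀ i, (z ^ i) ∘L s ∘L t ∘L A = (u ^ (i + 2)) ∘L A := by
    intro z hz s hs t ht i
    rw [hS s hs t ht, ← pow_comp_pow_comp_of_comp_comp (hS z hz u hu) i 1, pow_two, mul_def]
    rfl
  rcases k with _ | k
  · rw [pow_one, pow_succ, mul_def, ContinuousLinearMap.comp_assoc]
    exact hpow x hx x hx y hy j
  · have hyA : (y ^ (k + 1 + 1)) ∘L A = (u ^ (k + 1 + 1)) ∘L A := by
      rw [pow_succ, pow_succ, mul_def, mul_def]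
      exact hpow y hy y hy y hy k
    rw [hyA, pow_comp_pow_comp_of_comp_comp (hS x hx u hu) (j + 1) (k + 1),
      show j + 1 + (k + 1) + 1 = j + (k + 1) + 2 by omega]

end Semiring

section CommSemiring

variable {R M N : Type*} [CommSemiring R] [TopologicalSpace M] [AddCommMonoid M] [Module R M]
  [TopologicalSpace N] [AddCommMonoid N] [Module R N]

theorem sum_smul_pow_comp_sum_smul_pow_comp [ContinuousAdd N] [ContinuousConstSMul R N]
    {A : M →L[R] N} {B : N →L[R] M} {S : Set (N →L[R] N)} (hu : A ∘L B ∈ S)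
    (hS : ∀ s ∈ S, ∀ t ∈ S, s ∘L t ∘L A = (A ∘L B) ∘L (A ∘L B) ∘L A)
    {x y : N →L[R] N} (hx : x ∈ S) (hy : y ∈ S) {s : Finset ℕ} (hs : 0 ∉ s) (c : ℕ → R) :
    (∑ j ∈ s, c j • x ^ j) ∘L (∑ k ∈ s, c k • y ^ k) ∘L A =
      (∑ j ∈ s, c j • (A ∘L B) ^ j) ∘L (∑ k ∈ s, c k • (A ∘L B) ^ k) ∘L A := by
  have hterm : ∀ j ∈ s, ∀ k ∈ s,
      (x ^ j) ∘L (y ^ k) ∘L A = ((A ∘L B) ^ j) ∘L ((A ∘L B) ^ k) ∘L A := by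
    intro j hj k hk
    obtain ⟨j, rfl⟩ := Nat.exists_eq_succ_of_ne_zero (ne_of_mem_of_not_mem hj hs)
    obtain ⟨k, rfl⟩ := Nat.exists_eq_succ_of_ne_zero (ne_of_mem_of_not_mem hk hs)
    rw [pow_comp_pow_comp_of_forall_mem hu hS hx hy, pow_comp_pow_comp_of_forall_mem hu hS hu hu]
  simp only [finsetSum_comp, comp_finsetSum, smul_comp, comp_smul]
  exact sum_congr rfl fun j hj => congrArg _ <| sum_congr rfl fun k hk => by rw [hterm k hk j hj]

theorem comp_sum_smul_pow_comp_comp [ContinuousAdd M] [ContinuousConstSMul R M]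
    [ContinuousAdd N] [ContinuousConstSMul R N] (A : M →L[R] N) (C : N →L[R] M)
    {s : Finset ℕ} (hs : 0 ∉ s) (c : ℕ → R) :
    A ∘L (∑ k ∈ s, c k • ((C ∘L A) ^ (k - 1)) ∘L C) = ∑ k ∈ s, c k • (A ∘L C) ^ k := by
  rw [comp_finsetSum]
  refine sum_congr rfl fun k hk => ?_
  obtain ⟨m, rfl⟩ := Nat.exists_eq_succ_of_ne_zero (ne_of_mem_of_not_mem hk hs)
  rw [comp_smul, Nat.succ_sub_one, pow_succ, mul_def, ← ContinuousLinearMap.comp_assoc A,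
    ← pow_comp_comp_self]
  rfl

theorem comp_sum_smul_comp_pow [ContinuousAdd M] [ContinuousConstSMul R M]
    [ContinuousAdd N] [ContinuousConstSMul R N] (A : M →L[R] N) (B : N →L[R] M)
    {s : Finset ℕ} (hs : 0 ∉ s) (c : ℕ → R) :
    A ∘L (∑ k ∈ s, c k • B ∘L (A ∘L B) ^ (k - 1)) = ∑ k ∈ s, c k • (A ∘L B) ^ k := by
  rw [comp_finsetSum]
  refine sum_congr rfl fun k hk => ?_
  obtain ⟨m, rfl⟩ := Nat.exists_eq_succ_of_ne_zero (ne_of_mem_of_not_mem hk hs)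
  rw [comp_smul, Nat.succ_sub_one, pow_succ', mul_def]
  rfl

theorem sum_smul_comp_pow_comp [ContinuousAdd M] [ContinuousConstSMul R M] (A : M →L[R] N)
    (B : N →L[R] M) {s : Finset ℕ} (hs : 0 ∉ s) (c : ℕ → R) :
    (∑ k ∈ s, c k • B ∘L (A ∘L B) ^ (k - 1)) ∘L A = ∑ k ∈ s, c k • (B ∘L A) ^ k := by
  rw [finsetSum_comp]
  refine sum_congr rfl fun k hk => ?_
  obtain ⟨m, rfl⟩ := Nat.exists_eq_succ_of_ne_zero (ne_of_mem_of_not_mem hk hs)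
  rw [smul_comp, Nat.succ_sub_one, ContinuousLinearMap.comp_assoc, pow_comp_comp_self,
    pow_succ', mul_def]
  rfl

end CommSemiring

end ContinuousLinearMap

theorem stmt13_general (A : X →L[ℂ] Y) (B C : Y →L[ℂ] X)
    (h1 : A ∘L B ∘L A ∘L B ∘L A = A ∘L B ∘L A ∘L C ∘L A)
    (h2 : A ∘L B ∘L A ∘L C ∘L A = A ∘L C ∘L A ∘L B ∘L A)
    (h3 : A ∘L C ∘L A ∘L B ∘L A = A ∘L C ∘L A ∘L C ∘L A) (n : ℕ) (Bn Cn : Y →L[ℂ] X)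
    (hBn : Bn = ∑ k ∈ Finset.Icc 1 n,
      ((-1 : ℂ) ^ (k - 1) * (n.choose k : ℂ)) • (B ∘L (A ∘L B) ^ (k - 1)))
    (hCn : Cn = ∑ k ∈ Finset.Icc 1 n,
      ((-1 : ℂ) ^ (k - 1) * (n.choose k : ℂ)) • (((C ∘L A) ^ (k - 1)).comp C)) :
    (1 - A ∘L C) ^ n = 1 - A ∘L Cn ∧
    (1 - B ∘L A) ^ n = 1 - Bn ∘L A ∧
    A ∘L Bn ∘L A ∘L Bn ∘L A = A ∘L Bn ∘L A ∘L Cn ∘L A ∧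
    A ∘L Bn ∘L A ∘L Cn ∘L A = A ∘L Cn ∘L A ∘L Bn ∘L A ∧
    A ∘L Cn ∘L A ∘L Bn ∘L A = A ∘L Cn ∘L A ∘L Cn ∘L A := by
  have hs : 0 ∉ Icc 1 n := by simp
  let c : ℕ → ℂ := fun k => (-1) ^ (k - 1) * n.choose k
  have hABn : A ∘L Bn = ∑ k ∈ Icc 1 n, c k • (A ∘L B) ^ k :=
    hBn ▸ comp_sum_smul_comp_pow A B hs c
  have hACn : A ∘L Cn = ∑ k ∈ Icc 1 n, c k • (A ∘L C) ^ k :=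
    hCn ▸ comp_sum_smul_pow_comp_comp A C hs c
  let S : Set (Y →L[ℂ] Y) := {A ∘L B, A ∘L C}
  have hu : A ∘L B ∈ S := Set.mem_insert _ _
  have hv : A ∘L C ∈ S := Set.mem_insert_of_mem _ rfl
  have hS : ∀ s ∈ S, ∀ t ∈ S, s ∘L t ∘L A = (A ∘L B) ∘L (A ∘L B) ∘L A := by
    rintro s (rfl | rfl) t (rfl | rfl)
    exacts [rfl, h1.symm, (h1.trans h2).symm, (h1.trans (h2.trans h3)).symm]
  have key {x y} (hx : x ∈ S) (hy : y ∈ S) :=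
    sum_smul_pow_comp_sum_smul_pow_comp hu hS hx hy hs c
  refine ⟨?_, ?_, ?_, ?_, ?_⟩
  · rw [hACn, one_sub_pow_eq_one_sub_sum (𝕜 := ℂ)]
  · rw [hBn, sum_smul_comp_pow_comp A B hs, one_sub_pow_eq_one_sub_sum (𝕜 := ℂ)]
  · change (A ∘L Bn) ∘L (A ∘L Bn) ∘L A = (A ∘L Bn) ∘L (A ∘L Cn) ∘L A
    rw [hABn, hACn, key hu hv]
  · change (A ∘L Bn) ∘L (A ∘L Cn) ∘L A = (A ∘L Cn) ∘L (A ∘L Bn) ∘L A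
    rw [hABn, hACn, key hu hv, key hv hu]
  · change (A ∘L Cn) ∘L (A ∘L Bn) ∘L A = (A ∘L Cn) ∘L (A ∘L Cn) ∘L A
    rw [hABn, hACn, key hv hu, key hv hv]

theorem stmt13 (A : X →L[ℂ] Y) (B C : Y →L[ℂ] X)
    (h1 : A ∘L B ∘L A ∘L B ∘L A = A ∘L B ∘L A ∘L C ∘L A)
    (h2 : A ∘L B ∘L A ∘L C ∘L A = A ∘L C ∘L A ∘L B ∘L A)
    (h3 : A ∘L C ∘L A ∘L B ∘L A = A ∘L C ∘L A ∘L C ∘L A) (n : ℕ) (hn : 1 ≤ n) (Bn Cn : Y →L[ℂ] X)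
    (hBn : Bn = ∑ k ∈ Finset.Icc 1 n,
      ((-1 : ℂ) ^ (k - 1) * (n.choose k : ℂ)) • (B ∘L (A ∘L B) ^ (k - 1)))
    (hCn : Cn = ∑ k ∈ Finset.Icc 1 n,
      ((-1 : ℂ) ^ (k - 1) * (n.choose k : ℂ)) • (((C ∘L A) ^ (k - 1)).comp C)) :
    (1 - A ∘L C) ^ n = 1 - A ∘L Cn ∧
    (1 - B ∘L A) ^ n = 1 - Bn ∘L A ∧
    A ∘L Bn ∘L A ∘L Bn ∘L A = A ∘L Bn ∘L A ∘L Cn ∘L A ∧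
    A ∘L Bn ∘L A ∘L Cn ∘L A = A ∘L Cn ∘L A ∘L Bn ∘L A ∧
    A ∘L Cn ∘L A ∘L Bn ∘L A = A ∘L Cn ∘L A ∘L Cn ∘L A :=
  stmt13_general A B C h1 h2 h3 n Bn Cn hBn hCn
end

section
/- Let A : X → Y and B, C : Y → X be bounded linear operators between Banach spaces satisfying A(BA)² = ABACA = ACABA = (AC)²A. Then for every n ≥ 1, the range of (AC − I)^n is closed if and only if the range of (BA − I)^n is closed. -/
/-!
Put `s = B A`, `t = C A` and `d = s - t`. The hypothesis implies that a product of three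
factors from `{s, t}` depends only on its first factor, so `d` is killed by most short products
and expanding `(1 - t)^n` around `(1 - s)^n` gives, with `Q = ∑_{j<n} (1 - s)^j`,
`(1 - t)^n = (1 + n² s d - C(n,2) t d) (1 - s)^n (1 + d Q)`,
where both outer factors are unipotent. Hence `(1 - CA)^n` and `(1 - BA)^n` have closed range
together. Barnes' argument moves closedness between `(1 - AC)^n` and `(1 - CA)^n`: both are of the
form `1 - A D'` and `1 - D' A`, and if `D y = (1 - D' A) x` then `y = (1 - A D') (y + A x)`.
-/

open Polynomial ContinuousLinearMap

open Finset

section TripleProducts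

variable {R : Type*} [Ring R]

def TripleProductsDependOnFirst (s t : R) : Prop :=
  ∀ x ∈ ({s, t} : Set R), ∀ y ∈ ({s, t} : Set R), ∀ z ∈ ({s, t} : Set R), x * y * z = x * s * s

namespace TripleProductsDependOnFirst

variable {s t x y : R}

lemma mul_mul_sub_eq_zero (h : TripleProductsDependOnFirst s t) (hx : x ∈ ({s, t} : Set R))
    (hy : y ∈ ({s, t} : Set R)) : x * y * (s - t) = 0 := by
  rw [mul_sub, h x hx y hy s (Set.mem_insert _ _), h x hx y hy t (Set.mem_insert_of_mem _ rfl),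
    sub_self]

lemma mul_sub_mul_eq_zero (h : TripleProductsDependOnFirst s t) (hx : x ∈ ({s, t} : Set R))
    (hy : y ∈ ({s, t} : Set R)) : x * (s - t) * y = 0 := by
  rw [mul_sub, sub_mul, h x hx s (Set.mem_insert _ _) y hy,
    h x hx t (Set.mem_insert_of_mem _ rfl) y hy, sub_self]

lemma mul_sub_mul_sub_eq_zero (h : TripleProductsDependOnFirst s t) (hx : x ∈ ({s, t} : Set R)) :
    x * (s - t) * (s - t) = 0 := by
  rw [mul_sub _ s t, h.mul_sub_mul_eq_zero hx (Set.mem_insert _ _),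
    h.mul_sub_mul_eq_zero hx (Set.mem_insert_of_mem _ rfl), sub_self]

lemma sub_mul_mul_sub_eq_zero (h : TripleProductsDependOnFirst s t) (hy : y ∈ ({s, t} : Set R)) :
    (s - t) * y * (s - t) = 0 := by
  rw [sub_mul s t y, sub_mul, h.mul_mul_sub_eq_zero (Set.mem_insert _ _) hy,
    h.mul_mul_sub_eq_zero (Set.mem_insert_of_mem _ rfl) hy, sub_self]

lemma sub_mul_sub_mul_sub_eq_zero (h : TripleProductsDependOnFirst s t) :
    (s - t) * (s - t) * (s - t) = 0 := by
  rw [sub_mul s t (s - t), sub_mul, h.mul_sub_mul_sub_eq_zero (Set.mem_insert _ _),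
    h.mul_sub_mul_sub_eq_zero (Set.mem_insert_of_mem _ rfl), sub_self]

lemma one_sub_pow_mul_sub (h : TripleProductsDependOnFirst s t) (j : ℕ) :
    (1 - s) ^ j * (s - t) = (s - t) - j • (s * (s - t)) := by
  induction j with
  | zero => simp
  | succ j ih =>
    rw [pow_succ', mul_assoc, ih, one_sub_mul, mul_sub s (s - t), mul_smul_comm, ← mul_assoc s s,
      h.mul_mul_sub_eq_zero (Set.mem_insert _ _) (Set.mem_insert _ _), smul_zero, sub_zero,
      succ_nsmul]
    abel

lemma mul_sub_mul_one_sub_pow (h : TripleProductsDependOnFirst s t) (hx : x ∈ ({s, t} : Set R))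
    (j : ℕ) : x * (s - t) * (1 - s) ^ j = x * (s - t) := by
  induction j with
  | zero => simp
  | succ j ih =>
    rw [pow_succ, ← mul_assoc, ih, mul_one_sub, h.mul_sub_mul_eq_zero hx (Set.mem_insert _ _),
      sub_zero]

lemma mul_one_sub_pow_mul_sub (h : TripleProductsDependOnFirst s t) (hx : x ∈ ({s, t} : Set R))
    (j : ℕ) : x * (1 - s) ^ j * (s - t) = x * (s - t) := by
  rw [mul_assoc, h.one_sub_pow_mul_sub, mul_sub, mul_smul_comm, ← mul_assoc,
    h.mul_mul_sub_eq_zero hx (Set.mem_insert _ _), smul_zero, sub_zero]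

lemma mul_one_sub_pow (h : TripleProductsDependOnFirst s t) (hx : x ∈ ({s, t} : Set R)) (j : ℕ) :
    x * (1 - t) ^ j = x * (1 - s) ^ j + j • (x * (s - t)) := by
  induction j with
  | zero => simp
  | succ j ih =>
    have hts : (1 : R) - t = (1 - s) + (s - t) := by abel
    rw [pow_succ, ← mul_assoc, ih, add_mul, smul_mul_assoc, mul_one_sub (x * (s - t)),
      h.mul_sub_mul_eq_zero hx (Set.mem_insert_of_mem _ rfl), sub_zero, hts, mul_add,
      h.mul_one_sub_pow_mul_sub hx, mul_assoc x, ← pow_succ, succ_nsmul]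
    abel

lemma one_sub_pow_eq (h : TripleProductsDependOnFirst s t) (n : ℕ) :
    (1 - t) ^ n = (1 - s) ^ n + (s - t) * ∑ j ∈ range n, (1 - s) ^ j
      - n.choose 2 • (t * (s - t)) := by
  induction n with
  | zero => simp
  | succ n ih =>
    have hts : t * (1 - s) ^ n = s * (1 - s) ^ n - (s - t) * (1 - s) ^ n := by
      rw [← sub_mul, sub_sub_cancel]
    rw [pow_succ', one_sub_mul, h.mul_one_sub_pow (Set.mem_insert_of_mem _ rfl), ih, hts,
      pow_succ', one_sub_mul, sum_range_succ, mul_add, Nat.choose_succ_succ', Nat.choose_one_right,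
      add_nsmul]
    abel

lemma one_sub_pow_eq_mul_mul (h : TripleProductsDependOnFirst s t) (n : ℕ) :
    (1 - t) ^ n = (1 + ((n * n) • (s * (s - t)) - n.choose 2 • (t * (s - t)))) * (1 - s) ^ n
      * (1 + (s - t) * ∑ j ∈ range n, (1 - s) ^ j) := by
  have hs : s ∈ ({s, t} : Set R) := Set.mem_insert _ _
  have ht : t ∈ ({s, t} : Set R) := Set.mem_insert_of_mem _ rfl
  have hsdQ : s * (s - t) * ∑ j ∈ range n, (1 - s) ^ j = n • (s * (s - t)) := by
    simp only [mul_sum, h.mul_sub_mul_one_sub_pow hs, sum_const, card_range]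
  have hsdP := h.mul_sub_mul_one_sub_pow hs n
  have htdP := h.mul_sub_mul_one_sub_pow ht n
  have hPd := h.one_sub_pow_mul_sub n
  have hsdd := h.mul_sub_mul_sub_eq_zero hs
  have htdd := h.mul_sub_mul_sub_eq_zero ht
  rw [h.one_sub_pow_eq n]
  set d := s - t
  set P := (1 - s) ^ n
  set Q := ∑ j ∈ range n, (1 - s) ^ j
  clear_value d P Q
  symm
  calc (1 + ((n * n) • (s * d) - n.choose 2 • (t * d))) * P * (1 + d * Q)
      = (P + ((n * n) • (s * d) - n.choose 2 • (t * d))) * (1 + d * Q) := by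
        rw [one_add_mul, sub_mul, smul_mul_assoc, smul_mul_assoc, hsdP, htdP]
    _ = P + d * Q - n.choose 2 • (t * d) := by
        have had : (P + ((n * n) • (s * d) - n.choose 2 • (t * d))) * d = d - n • (s * d) := by
          simp only [add_mul, sub_mul, smul_mul_assoc, hPd, hsdd, htdd, smul_zero, sub_zero,
            add_zero]
        rw [mul_one_add, ← mul_assoc, had, sub_mul, smul_mul_assoc, hsdQ, smul_smul]
        abel

lemma exists_isUnit_one_sub_pow_eq (h : TripleProductsDependOnFirst s t) (n : ℕ) :
    ∃ a b : R, IsUnit a ∧ IsUnit b ∧ (1 - t) ^ n = a * (1 - s) ^ n * b := by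
  have hs : s ∈ ({s, t} : Set R) := Set.mem_insert _ _
  have ht : t ∈ ({s, t} : Set R) := Set.mem_insert_of_mem _ rfl
  refine ⟨_, _, IsNilpotent.isUnit_one_add ⟨2, ?_⟩, IsNilpotent.isUnit_one_add ⟨3, ?_⟩,
    h.one_sub_pow_eq_mul_mul n⟩
  · have hkill : ∀ x ∈ ({s, t} : Set R), ∀ y ∈ ({s, t} : Set R),
        x * (s - t) * (y * (s - t)) = 0 :=
      fun x hx y hy => by rw [← mul_assoc, h.mul_sub_mul_eq_zero hx hy, zero_mul]
    have hss := hkill s hs s hs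
    have hst := hkill s hs t ht
    have hts := hkill t ht s hs
    have htt := hkill t ht t ht
    set d := s - t
    clear_value d
    simp only [sq, mul_sub, sub_mul, smul_mul_assoc, mul_smul_comm, hss, hst, hts, htt, smul_zero,
      sub_zero]
  · have hdPd : ∀ j, (s - t) * (1 - s) ^ j * (s - t) = (s - t) * (s - t) := fun j => by
      rw [mul_assoc, h.one_sub_pow_mul_sub, mul_sub, mul_smul_comm, ← mul_assoc (s - t) s,
        h.sub_mul_mul_sub_eq_zero hs, smul_zero, sub_zero]
    have hddd := h.sub_mul_sub_mul_sub_eq_zero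
    set Q := ∑ j ∈ range n, (1 - s) ^ j
    have hdQd : (s - t) * Q * (s - t) = n • ((s - t) * (s - t)) := by
      simp only [Q, mul_sum, sum_mul, hdPd, sum_const, card_range]
    set d := s - t
    clear_value d Q
    calc (d * Q) ^ 3 = (d * Q * d) * (Q * d * Q) := by noncomm_ring
      _ = n • (d * d * (Q * d * Q)) := by rw [hdQd, smul_mul_assoc]
      _ = n • (d * (d * Q * d) * Q) := by simp only [mul_assoc]
      _ = 0 := by rw [hdQd, mul_smul_comm, smul_mul_assoc, ← mul_assoc, hddd, zero_mul, smul_zero,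
        smul_zero]

end TripleProductsDependOnFirst

end TripleProducts

lemma tripleProductsDependOnFirst_comp {R : Type*} [Ring R] {M N : Type*} [TopologicalSpace M]
    [AddCommGroup M] [IsTopologicalAddGroup M] [Module R M] [TopologicalSpace N] [AddCommGroup N]
    [Module R N] {A : M →L[R] N} {B C : N →L[R] M}
    (h1 : A ∘L B ∘L A ∘L B ∘L A = A ∘L B ∘L A ∘L C ∘L A)
    (h2 : A ∘L B ∘L A ∘L C ∘L A = A ∘L C ∘L A ∘L B ∘L A)
    (h3 : A ∘L C ∘L A ∘L B ∘L A = A ∘L C ∘L A ∘L C ∘L A) :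
    TripleProductsDependOnFirst (B ∘L A) (C ∘L A) := by
  have hA : ∀ y ∈ ({B ∘L A, C ∘L A} : Set (M →L[R] M)),
      ∀ z ∈ ({B ∘L A, C ∘L A} : Set (M →L[R] M)), A ∘L y ∘L z = A ∘L B ∘L A ∘L B ∘L A := by
    rintro y (rfl | rfl) z (rfl | rfl)
    exacts [rfl, h1.symm, (h1.trans h2).symm, (h1.trans (h2.trans h3)).symm]
  rintro x (rfl | rfl) y hy z hz <;> exact congrArg (_ ∘L ·) (hA y hy z hz)

section ClosedRange

variable {R : Type*} [Ring R] {M N : Type*} [TopologicalSpace M] [AddCommGroup M]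
  [IsTopologicalAddGroup M] [Module R M] [TopologicalSpace N] [AddCommGroup N]
  [IsTopologicalAddGroup N] [Module R N]

lemma isClosed_range_mul_mul_iff {u f v : M →L[R] M} (hu : IsUnit u) (hv : IsUnit v) :
    IsClosed (Set.range ⇑(u * f * v)) ↔ IsClosed (Set.range f) := by
  obtain ⟨u, rfl⟩ := hu
  obtain ⟨v, rfl⟩ := hv
  have hrange : Set.range ⇑(u * f * v : M →L[R] M) =
      ContinuousLinearEquiv.unitsEquiv R M u '' Set.range f := by
    have hv : Function.Surjective (v : M →L[R] M) :=
      (ContinuousLinearEquiv.unitsEquiv R M v).surjective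
    rw [FunLike.coe_mul_eq_comp, FunLike.coe_mul_eq_comp, hv.range_comp, Set.range_comp]
    rfl
  rw [hrange, ContinuousLinearEquiv.isClosed_image]

lemma isClosed_range_sub_one_pow_iff (f : M →L[R] M) (n : ℕ) :
    IsClosed (Set.range ⇑((f - 1) ^ n)) ↔ IsClosed (Set.range ⇑((1 - f) ^ n)) := by
  rw [← neg_sub 1 f, neg_pow, ← mul_one ((-1) ^ n * (1 - f) ^ n)]
  exact isClosed_range_mul_mul_iff (isUnit_neg_one.pow n) isUnit_one

lemma isClosed_range_one_sub_comp_of_isClosed (A : M →L[R] N) (D : N →L[R] M)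
    (h : IsClosed (Set.range ⇑(1 - D ∘L A))) : IsClosed (Set.range ⇑(1 - A ∘L D)) := by
  refine isClosed_of_closure_subset fun y hy => ?_
  have hDy : D y ∈ closure (Set.range ⇑(1 - D ∘L A)) := by
    refine map_mem_closure D.continuous hy ?_
    rintro _ ⟨z, rfl⟩
    exact ⟨D z, by simp⟩
  obtain ⟨x, hx⟩ := h.closure_eq ▸ hDy
  refine ⟨y + A x, ?_⟩
  have hAx : A x - A (D (A x)) = A (D y) := by
    rw [← map_sub, ← hx]
    simp
  simp only [map_add, sub_apply, one_apply_eq_self, comp_apply]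
  rw [← hAx]
  abel

lemma exists_one_sub_comp_pow_eq (A : M →L[R] N) (D : N →L[R] M) (n : ℕ) :
    ∃ D' : N →L[R] M, (1 - A ∘L D) ^ n = 1 - A ∘L D' ∧ (1 - D ∘L A) ^ n = 1 - D' ∘L A := by
  induction n with
  | zero => exact ⟨0, by simp, by simp⟩
  | succ n ih =>
    obtain ⟨D', hAD, hDA⟩ := ih
    refine ⟨D + D' - D' ∘L A ∘L D, ?_, ?_⟩
    · rw [pow_succ, hAD]
      ext x
      simp only [mul_apply_eq_comp, sub_apply, one_apply_eq_self, comp_apply, add_apply, map_sub,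
        map_add]
      abel
    · rw [pow_succ, hDA]
      ext x
      simp only [mul_apply_eq_comp, sub_apply, one_apply_eq_self, comp_apply, add_apply, map_sub]
      abel

lemma isClosed_range_one_sub_comp_pow_iff (A : M →L[R] N) (D : N →L[R] M) (n : ℕ) :
    IsClosed (Set.range ⇑((1 - A ∘L D) ^ n)) ↔ IsClosed (Set.range ⇑((1 - D ∘L A) ^ n)) := by
  obtain ⟨D', hAD, hDA⟩ := exists_one_sub_comp_pow_eq A D n
  rw [hAD, hDA]
  exact ⟨isClosed_range_one_sub_comp_of_isClosed D' A,
    isClosed_range_one_sub_comp_of_isClosed A D'⟩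

end ClosedRange

variable {X Y : Type*} [NormedAddCommGroup X] [NormedSpace ℂ X] [CompleteSpace X]
  [NormedAddCommGroup Y] [NormedSpace ℂ Y] [CompleteSpace Y]

theorem stmt14_general (A : X →L[ℂ] Y) (B C : Y →L[ℂ] X)
    (h1 : A ∘L B ∘L A ∘L B ∘L A = A ∘L B ∘L A ∘L C ∘L A)
    (h2 : A ∘L B ∘L A ∘L C ∘L A = A ∘L C ∘L A ∘L B ∘L A)
    (h3 : A ∘L C ∘L A ∘L B ∘L A = A ∘L C ∘L A ∘L C ∘L A) (n : ℕ) :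
    IsClosed ((LinearMap.range (((A ∘L C - 1) ^ n : Y →L[ℂ] Y) : Y →ₗ[ℂ] Y) : Submodule ℂ Y) : Set Y) ↔
      IsClosed ((LinearMap.range (((B ∘L A - 1) ^ n : X →L[ℂ] X) : X →ₗ[ℂ] X) : Submodule ℂ X) : Set X) := by
  obtain ⟨a, b, ha, hb, hCA⟩ :=
    (tripleProductsDependOnFirst_comp h1 h2 h3).exists_isUnit_one_sub_pow_eq n
  simp only [LinearMap.coe_range, coe_coe]
  rw [isClosed_range_sub_one_pow_iff, isClosed_range_sub_one_pow_iff,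
    isClosed_range_one_sub_comp_pow_iff, hCA, isClosed_range_mul_mul_iff ha hb]

theorem stmt14 (A : X →L[ℂ] Y) (B C : Y →L[ℂ] X)
    (h1 : A ∘L B ∘L A ∘L B ∘L A = A ∘L B ∘L A ∘L C ∘L A)
    (h2 : A ∘L B ∘L A ∘L C ∘L A = A ∘L C ∘L A ∘L B ∘L A)
    (h3 : A ∘L C ∘L A ∘L B ∘L A = A ∘L C ∘L A ∘L C ∘L A) (n : ℕ) (hn : 1 ≤ n) :
    IsClosed ((LinearMap.range (((A ∘L C - 1) ^ n : Y →L[ℂ] Y) : Y →ₗ[ℂ] Y) : Submodule ℂ Y) : Set Y) ↔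
      IsClosed ((LinearMap.range (((B ∘L A - 1) ^ n : X →L[ℂ] X) : X →ₗ[ℂ] X) : Submodule ℂ X) : Set X) :=
  stmt14_general A B C h1 h2 h3 n
end

section
/- Let A : X → Y and B, C : Y → X satisfy A(BA)² = ABACA = ACABA = (AC)²A, and suppose S ∈ L(Y) commutes with AC and satisfies S(AC)S = S. Then T := BS²A satisfies T(BA) = (BA)T and T(BA)T = T. -/
open Polynomial ContinuousLinearMap

variable {X Y : Type*} [NormedAddCommGroup X] [NormedSpace ℂ X] [CompleteSpace X]
  [NormedAddCommGroup Y] [NormedSpace ℂ Y] [CompleteSpace Y]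
theorem stmt15 (A : X →L[ℂ] Y) (B C : Y →L[ℂ] X)
    (h1 : A ∘L B ∘L A ∘L B ∘L A = A ∘L B ∘L A ∘L C ∘L A)
    (h2 : A ∘L B ∘L A ∘L C ∘L A = A ∘L C ∘L A ∘L B ∘L A)
    (h3 : A ∘L C ∘L A ∘L B ∘L A = A ∘L C ∘L A ∘L C ∘L A) (S : Y →L[ℂ] Y)
    (hS1 : S ∘L (A ∘L C) = (A ∘L C) ∘L S)
    (hS2 : S ∘L (A ∘L C) ∘L S = S) :
    (B ∘L S ∘L S ∘L A) ∘L (B ∘L A) = (B ∘L A) ∘L (B ∘L S ∘L S ∘L A) ∧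
    (B ∘L S ∘L S ∘L A) ∘L (B ∘L A) ∘L (B ∘L S ∘L S ∘L A) = B ∘L S ∘L S ∘L A := by
  -- pointwise versions of the hypotheses
  have h2' : ∀ x, A (B (A (C (A x)))) = A (C (A (B (A x)))) := by
    intro x; simpa using ContinuousLinearMap.ext_iff.mp h2 x
  have h3' : ∀ x, A (C (A (B (A x)))) = A (C (A (C (A x)))) := by
    intro x; simpa using ContinuousLinearMap.ext_iff.mp h3 x
  have hS1' : ∀ y, S (A (C y)) = A (C (S y)) := by
    intro y; simpa using ContinuousLinearMap.ext_iff.mp hS1 y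
  have hS2' : ∀ y, S (A (C (S y))) = S y := by
    intro y; simpa using ContinuousLinearMap.ext_iff.mp hS2 y
  -- mixed identity ABACA = ACACA
  have hmix : ∀ x, A (B (A (C (A x)))) = A (C (A (C (A x)))) := fun x =>
    (h2' x).trans (h3' x)
  -- S² (AC) = S
  have k2 : ∀ y, S (S (A (C y))) = S y := by
    intro y
    rw [hS1' y, hS2' y]
  -- (AC) S² = S
  have k1 : ∀ y, A (C (S (S y))) = S y := by
    intro y
    rw [← hS1' (S y), hS2' y]
  -- key1 : S² A B A z = S (A z)
  have key1 : ∀ z, S (S (A (B (A z)))) = S (A z) := by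
    intro z
    rw [← k2 (A (B (A z))), h3' z, k2 (A (C (A z))), k2 (A z)]
  -- key2 : A B S² A x = S (A x)
  have key2 : ∀ x, A (B (S (S (A x)))) = S (A x) := by
    intro x
    rw [← k1 (S (A x)), ← k1 (S (S (A x))), hmix (C (S (S (S (S (A x)))))),
      k1 (S (S (A x))), k1 (S (A x)), k1 (A x)]
  constructor
  · ext x
    simp only [comp_apply]
    rw [key1 x, key2 x]
  · ext x
    simp only [comp_apply]
    rw [key1 (B (S (S (A x)))), key2 x]
end

section
/- Let A : X → Y and B, C : Y → X satisfy A(BA)² = ABACA = ACABA = (AC)²A, and let S ∈ L(Y) commute with AC and satisfy S(AC)S = S. Set P = S(AC) − I. Then (PA)B(PA)B(PA) = (PA)B(PA)C(PA) = (PA)C(PA)B(PA) = (PA)C(PA)C(PA); in other words, the operators A' = PA, B' = B, C' = C satisfy A'(B'A')² = A'B'A'C'A' = A'C'A'B'A' = (A'C')²A'. -/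
/-!
Write `T = AC`. The hypothesis says that every word `A U A V A` with `U, V ∈ {B, C}` equals
`T²A`. Since `P = ST - 1` commutes with `T`, one has `PA = A(CSA - 1)`, so an inner word
`A U A V (PA)` still collapses to `T²(PA)`; expanding the middle `P` of `(PA)U(PA)V(PA)` and
collapsing both resulting words gives `(PA)U(PA)V(PA) = T²P³A`, independently of `U` and `V`.
-/

open ContinuousLinearMap

section PerturbedWord

variable {R X Y : Type*} [Ring R] [TopologicalSpace X] [AddCommGroup X] [Module R X]
  [TopologicalSpace Y] [AddCommGroup Y] [Module R Y] [IsTopologicalAddGroup Y]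

theorem word_eq_of_chain {A : X →L[R] Y} {B C U V : Y →L[R] X}
    (h1 : A ∘L B ∘L A ∘L B ∘L A = A ∘L B ∘L A ∘L C ∘L A)
    (h2 : A ∘L B ∘L A ∘L C ∘L A = A ∘L C ∘L A ∘L B ∘L A)
    (h3 : A ∘L C ∘L A ∘L B ∘L A = A ∘L C ∘L A ∘L C ∘L A)
    (hU : U = B ∨ U = C) (hV : V = B ∨ V = C) :
    A ∘L U ∘L A ∘L V ∘L A = A ∘L C ∘L A ∘L C ∘L A := by
  rcases hU with rfl | rfl <;> rcases hV with rfl | rfl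
  exacts [h1.trans (h2.trans h3), h2.trans h3, h3, rfl]

theorem perturbed_word_eq (A : X →L[R] Y) (C U V : Y →L[R] X) (S P : Y →L[R] Y)
    (hUV : A ∘L U ∘L A ∘L V ∘L A = A ∘L C ∘L A ∘L C ∘L A)
    (hUC : A ∘L U ∘L A ∘L C ∘L A = A ∘L C ∘L A ∘L C ∘L A)
    (hCV : A ∘L C ∘L A ∘L V ∘L A = A ∘L C ∘L A ∘L C ∘L A)
    (hS : S ∘L (A ∘L C) = (A ∘L C) ∘L S) (hP : P = S ∘L (A ∘L C) - 1) :
    (P ∘L A) ∘L U ∘L (P ∘L A) ∘L V ∘L (P ∘L A) =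
      A ∘L C ∘L A ∘L C ∘L P ∘L P ∘L P ∘L A := by
  have wUV (x) := DFunLike.congr_fun hUV x
  have wUC (x) := DFunLike.congr_fun hUC x
  have wCV (x) := DFunLike.congr_fun hCV x
  have hST (y) : S (A (C y)) = A (C (S y)) := DFunLike.congr_fun hS y
  simp only [comp_apply] at wUV wUC wCV
  have hPy (y) : P y = S (A (C y)) - y := by simp [hP]
  have hPT (y) : P (A (C y)) = A (C (P y)) := by simp only [hPy, hST, map_sub]
  have hPA (x) : P (A x) = A (C (S (A x)) - x) := by rw [hPy, hST, map_sub]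
  have innerUV (x) : A (U (A (V (P (A x))))) = A (C (A (C (P (A x))))) := by
    simp only [hPA, wUV]
  have innerCV (x) : A (C (A (V (P (A x))))) = A (C (A (C (P (A x))))) := by
    simp only [hPA, wCV]
  ext x
  set y := A (V (P (A x)))
  have outer : A (U (S (A (C y)))) = A (C (A (C (A (C (S (P (A x)))))))) := by
    simp only [y, innerCV, hST, wUC]
  calc P (A (U (P y)))
      = P (A (U (S (A (C y)))) - A (U y)) := by rw [hPy y, map_sub, map_sub]
    _ = P (A (C (A (C (S (A (C (P (A x)))) - P (A x)))))) := by
        rw [outer, innerUV, hST, ← map_sub, ← map_sub, ← map_sub, ← map_sub]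
    _ = A (C (A (C (P (P (P (A x))))))) := by rw [← hPy, hPT, hPT]

end PerturbedWord

variable {X Y : Type*} [NormedAddCommGroup X] [NormedSpace ℂ X] [CompleteSpace X]
  [NormedAddCommGroup Y] [NormedSpace ℂ Y] [CompleteSpace Y]
theorem stmt16_general (A : X →L[ℂ] Y) (B C : Y →L[ℂ] X)
    (h1 : A ∘L B ∘L A ∘L B ∘L A = A ∘L B ∘L A ∘L C ∘L A)
    (h2 : A ∘L B ∘L A ∘L C ∘L A = A ∘L C ∘L A ∘L B ∘L A)
    (h3 : A ∘L C ∘L A ∘L B ∘L A = A ∘L C ∘L A ∘L C ∘L A) (S : Y →L[ℂ] Y)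
    (hS1 : S ∘L (A ∘L C) = (A ∘L C) ∘L S)
    (P : Y →L[ℂ] Y) (hP : P = S ∘L (A ∘L C) - 1) :
    (P ∘L A) ∘L B ∘L (P ∘L A) ∘L B ∘L (P ∘L A) =
        (P ∘L A) ∘L B ∘L (P ∘L A) ∘L C ∘L (P ∘L A) ∧
    (P ∘L A) ∘L B ∘L (P ∘L A) ∘L C ∘L (P ∘L A) =
        (P ∘L A) ∘L C ∘L (P ∘L A) ∘L B ∘L (P ∘L A) ∧
    (P ∘L A) ∘L C ∘L (P ∘L A) ∘L B ∘L (P ∘L A) =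
        (P ∘L A) ∘L C ∘L (P ∘L A) ∘L C ∘L (P ∘L A) := by
  have word {U V : Y →L[ℂ] X} (hU : U = B ∨ U = C) (hV : V = B ∨ V = C) :=
    perturbed_word_eq A C U V S P (word_eq_of_chain h1 h2 h3 hU hV)
      (word_eq_of_chain h1 h2 h3 hU (.inr rfl)) (word_eq_of_chain h1 h2 h3 (.inr rfl) hV) hS1 hP
  have hB : B = B ∨ B = C := .inl rfl
  have hC : C = B ∨ C = C := .inr rfl
  rw [word hB hB, word hB hC, word hC hB, word hC hC]
  exact ⟨rfl, rfl, rfl⟩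

theorem stmt16 (A : X →L[ℂ] Y) (B C : Y →L[ℂ] X)
    (h1 : A ∘L B ∘L A ∘L B ∘L A = A ∘L B ∘L A ∘L C ∘L A)
    (h2 : A ∘L B ∘L A ∘L C ∘L A = A ∘L C ∘L A ∘L B ∘L A)
    (h3 : A ∘L C ∘L A ∘L B ∘L A = A ∘L C ∘L A ∘L C ∘L A) (S : Y →L[ℂ] Y)
    (hS1 : S ∘L (A ∘L C) = (A ∘L C) ∘L S)
    (hS2 : S ∘L (A ∘L C) ∘L S = S)
    (P : Y →L[ℂ] Y) (hP : P = S ∘L (A ∘L C) - 1) :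
    (P ∘L A) ∘L B ∘L (P ∘L A) ∘L B ∘L (P ∘L A) =
        (P ∘L A) ∘L B ∘L (P ∘L A) ∘L C ∘L (P ∘L A) ∧
    (P ∘L A) ∘L B ∘L (P ∘L A) ∘L C ∘L (P ∘L A) =
        (P ∘L A) ∘L C ∘L (P ∘L A) ∘L B ∘L (P ∘L A) ∧
    (P ∘L A) ∘L C ∘L (P ∘L A) ∘L B ∘L (P ∘L A) =
        (P ∘L A) ∘L C ∘L (P ∘L A) ∘L C ∘L (P ∘L A) :=
  stmt16_general A B C h1 h2 h3 S hS1 P hP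
end
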